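/- arXiv:1212.1379 — 4 statements merged into one kernel-verified Lean document; each statement's English description precedes it below -/
import Mathlib

section
/- For every k ≥ 1, the value function v_k is strictly decreasing on [0,1]; that is, for all y ∈ [0,1) and all ε > 0 with y + ε ≤ 1, one has v_k(y + ε) < v_k(y). -/
open MeasureTheory Set

/-- The value functions of the optimal online alternating-subsequence selection
problem: `v 0 y = 0` and
`v (k+1) y = y * v k y + ∫ x in y..1, max (v k y) (1 + v k (1 - x))`. -/
noncomputable def v : ℕ → ℝ → ℝ
  | 0, _ => 0
  | (k+1), y => y * v k y + ∫ x in y..(1:ℝ), max (v k y) (1 + v k (1 - x))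

lemma max_eq_add (a b : ℝ) : max a b = a + max 0 (b - a) := by
  rw [← max_add_add_left, add_zero, add_sub_cancel]

lemma max_zero_sub_le (A d t : ℝ) (hd : 0 ≤ d) :
    max 0 (A - (t + d)) ≥ max 0 (A - t) - d := by
  rcases le_total (A - t) 0 with h | h
  · have h2 : max 0 (A - t) = 0 := max_eq_left h
    rw [h2]; have := le_max_left (0:ℝ) (A - (t + d)); linarith
  · have h1 : A - (t + d) ≤ max 0 (A - (t + d)) := le_max_right _ _
    have h2 : max 0 (A - t) = A - t := max_eq_right h
    linarith

lemma contOn_of_lip {f : ℝ → ℝ} {L : ℝ} (hL : 0 ≤ L)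
    (hLip : ∀ y ∈ Icc (0:ℝ) 1, ∀ z ∈ Icc (0:ℝ) 1, |f y - f z| ≤ L * |y - z|) :
    ContinuousOn f (Icc (0:ℝ) 1) := by
  have : LipschitzOnWith (Real.toNNReal L) f (Icc (0:ℝ) 1) := by
    apply LipschitzOnWith.of_dist_le_mul
    intro x hx y hy
    rw [Real.dist_eq, Real.dist_eq, Real.coe_toNNReal L hL]
    exact hLip x hx y hy
  exact this.continuousOn

lemma contM {f : ℝ → ℝ} (hf : ContinuousOn f (Icc (0:ℝ) 1)) (c : ℝ) :
    ContinuousOn (fun x => max c (1 + f (1 - x))) (Icc (0:ℝ) 1) := by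
  apply ContinuousOn.sup continuousOn_const
  apply continuousOn_const.add
  apply hf.comp (continuousOn_const.sub continuousOn_id)
  intro x hx
  simp only [Pi.sub_apply, id_eq, mem_Icc]
  exact ⟨by linarith [hx.1, hx.2], by linarith [hx.1, hx.2]⟩

lemma intM {g : ℝ → ℝ} (hg : ContinuousOn g (Icc (0:ℝ) 1)) {a b : ℝ}
    (ha : a ∈ Icc (0:ℝ) 1) (hb : b ∈ Icc (0:ℝ) 1) :
    IntervalIntegrable g volume a b := by
  apply ContinuousOn.intervalIntegrable
  apply hg.mono
  have ha' : a ∈ uIcc (0:ℝ) 1 := by rw [uIcc_of_le zero_le_one]; exact ha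
  have hb' : b ∈ uIcc (0:ℝ) 1 := by rw [uIcc_of_le zero_le_one]; exact hb
  exact (uIcc_subset_uIcc ha' hb').trans (by rw [uIcc_of_le zero_le_one])

lemma uIoc_sub {a b : ℝ} (ha : a ∈ Icc (0:ℝ) 1) (hb : b ∈ Icc (0:ℝ) 1) :
    Set.uIoc a b ⊆ Icc (0:ℝ) 1 := by
  apply Set.uIoc_subset_uIcc.trans
  have ha' : a ∈ uIcc (0:ℝ) 1 := by rw [uIcc_of_le zero_le_one]; exact ha
  have hb' : b ∈ uIcc (0:ℝ) 1 := by rw [uIcc_of_le zero_le_one]; exact hb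
  exact (uIcc_subset_uIcc ha' hb').trans (by rw [uIcc_of_le zero_le_one])

/-- Boundedness and Lipschitz continuity of `v k` on `[0,1]`, simultaneously. -/
lemma vBddLip (k : ℕ) : ∃ L : ℝ, 1 ≤ L ∧ (∀ y ∈ Icc (0:ℝ) 1, |v k y| ≤ L) ∧
    (∀ y ∈ Icc (0:ℝ) 1, ∀ z ∈ Icc (0:ℝ) 1, |v k y - v k z| ≤ L * |y - z|) := by
  induction k with
  | zero =>
    exact ⟨1, le_refl 1, fun y _ => by simp [v], fun y _ z _ => by simp [v]⟩
  | succ k ih =>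
    obtain ⟨L, hL1, hB, hLip⟩ := ih
    have hL0 : (0:ℝ) ≤ L := le_trans zero_le_one hL1
    have hcont : ContinuousOn (v k) (Icc (0:ℝ) 1) := contOn_of_lip hL0 hLip
    have h1 : (1:ℝ) ∈ Icc (0:ℝ) 1 := ⟨zero_le_one, le_refl 1⟩
    -- pointwise bound on the integrand
    have hMb : ∀ c ∈ Icc (0:ℝ) 1, ∀ x ∈ Icc (0:ℝ) 1,
        ‖max (v k c) (1 + v k (1 - x))‖ ≤ 1 + L := by
      intro c hc x hx
      have hx' : 1 - x ∈ Icc (0:ℝ) 1 := ⟨by linarith [hx.2], by linarith [hx.1]⟩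
      rw [Real.norm_eq_abs]
      rcases max_choice (v k c) (1 + v k (1 - x)) with h | h <;> rw [h]
      · linarith [hB c hc]
      · calc |1 + v k (1 - x)| ≤ |(1:ℝ)| + |v k (1 - x)| := abs_add_le _ _
          _ ≤ 1 + L := by simpa using hB _ hx'
    refine ⟨4 * L + 2, by linarith, ?_, ?_⟩
    · -- bound
      intro y hy
      have hint : ‖∫ x in y..(1:ℝ), max (v k y) (1 + v k (1 - x))‖ ≤ (1 + L) * |1 - y| := by
        apply intervalIntegral.norm_integral_le_of_norm_le_const
        intro x hx
        exact hMb y hy x (uIoc_sub hy h1 hx)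
      have h1y : |1 - y| ≤ 1 := by rw [abs_of_nonneg (by linarith [hy.2])]; linarith [hy.1]
      have hyv : |y * v k y| ≤ L := by
        rw [abs_mul]
        calc |y| * |v k y| ≤ 1 * L := by
              apply mul_le_mul _ (hB y hy) (abs_nonneg _) zero_le_one
              rw [abs_of_nonneg hy.1]; exact hy.2
          _ = L := one_mul L
      calc |v (k+1) y| ≤ |y * v k y| + ‖∫ x in y..(1:ℝ), max (v k y) (1 + v k (1 - x))‖ := by
            rw [show v (k+1) y = y * v k y + ∫ x in y..(1:ℝ), max (v k y) (1 + v k (1 - x))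
              from rfl]
            exact abs_add_le _ _
        _ ≤ L + (1 + L) * |1 - y| := add_le_add hyv hint
        _ ≤ 4 * L + 2 := by nlinarith [abs_nonneg (1 - y)]
    · -- Lipschitz
      suffices H : ∀ y ∈ Icc (0:ℝ) 1, ∀ z ∈ Icc (0:ℝ) 1, y ≤ z →
          |v (k+1) y - v (k+1) z| ≤ (4 * L + 2) * |y - z| by
        intro y hy z hz
        rcases le_total y z with h | h
        · exact H y hy z hz h
        · rw [abs_sub_comm, abs_sub_comm y z]; exact H z hz y hy h
      intro y hy z hz hyz
      set My : ℝ → ℝ := fun x => max (v k y) (1 + v k (1 - x)) with hMy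
      set Mz : ℝ → ℝ := fun x => max (v k z) (1 + v k (1 - x)) with hMz
      have icy : IntervalIntegrable My volume y z := intM (contM hcont _) hy hz
      have icz : IntervalIntegrable My volume z 1 := intM (contM hcont _) hz h1
      have icz' : IntervalIntegrable Mz volume z 1 := intM (contM hcont _) hz h1
      have hsplit : (∫ x in y..(1:ℝ), My x) = (∫ x in y..z, My x) + ∫ x in z..(1:ℝ), My x :=
        (intervalIntegral.integral_add_adjacent_intervals icy icz).symm
      have hsub : (∫ x in z..(1:ℝ), My x) - (∫ x in z..(1:ℝ), Mz x)
          = ∫ x in z..(1:ℝ), (My x - Mz x) := (intervalIntegral.integral_sub icz icz').symm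
      have key : v (k+1) y - v (k+1) z
          = (y * v k y - z * v k z) + (∫ x in y..z, My x)
            + ∫ x in z..(1:ℝ), (My x - Mz x) := by
        rw [show v (k+1) y = y * v k y + ∫ x in y..(1:ℝ), My x from rfl,
          show v (k+1) z = z * v k z + ∫ x in z..(1:ℝ), Mz x from rfl, hsplit]
        linarith [hsub]
      have b1 : |y * v k y - z * v k z| ≤ 2 * L * |y - z| := by
        have : y * v k y - z * v k z = y * (v k y - v k z) + (y - z) * v k z := by ring
        rw [this]
        calc |y * (v k y - v k z) + (y - z) * v k z|
            ≤ |y * (v k y - v k z)| + |(y - z) * v k z| := abs_add_le _ _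
          _ = |y| * |v k y - v k z| + |y - z| * |v k z| := by rw [abs_mul, abs_mul]
          _ ≤ 1 * (L * |y - z|) + |y - z| * L := by
              gcongr
              · rw [abs_of_nonneg hy.1]; exact hy.2
              · exact hLip y hy z hz
              · exact hB z hz
          _ = 2 * L * |y - z| := by ring
      have b2 : |∫ x in y..z, My x| ≤ (1 + L) * |y - z| := by
        rw [show |y - z| = |z - y| from abs_sub_comm y z, ← Real.norm_eq_abs]
        apply intervalIntegral.norm_integral_le_of_norm_le_const
        intro x hx
        exact hMb y hy x (uIoc_sub hy hz hx)
      have b3 : |∫ x in z..(1:ℝ), (My x - Mz x)| ≤ (L * |y - z|) * |1 - z| := by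
        rw [← Real.norm_eq_abs]
        apply intervalIntegral.norm_integral_le_of_norm_le_const
        intro x hx
        calc ‖My x - Mz x‖ ≤ |v k y - v k z| := abs_max_sub_max_le_abs _ _ _
          _ ≤ L * |y - z| := hLip y hy z hz
      have h1z : |1 - z| ≤ 1 := by rw [abs_of_nonneg (by linarith [hz.2])]; linarith [hz.1]
      have b3' : |∫ x in z..(1:ℝ), (My x - Mz x)| ≤ L * |y - z| := by
        calc |∫ x in z..(1:ℝ), (My x - Mz x)| ≤ (L * |y - z|) * |1 - z| := b3
          _ ≤ (L * |y - z|) * 1 := by nlinarith [abs_nonneg (y - z), mul_nonneg hL0 (abs_nonneg (y-z))]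
          _ = L * |y - z| := mul_one _
      calc |v (k+1) y - v (k+1) z|
          ≤ |y * v k y - z * v k z| + |∫ x in y..z, My x|
            + |∫ x in z..(1:ℝ), (My x - Mz x)| := by
            rw [key]; exact (abs_add_le _ _).trans (by gcongr; exact abs_add_le _ _)
        _ ≤ 2 * L * |y - z| + (1 + L) * |y - z| + L * |y - z| := by gcongr
        _ ≤ (4 * L + 2) * |y - z| := by nlinarith [abs_nonneg (y - z)]

lemma vCont (k : ℕ) : ContinuousOn (v k) (Icc (0:ℝ) 1) := by
  obtain ⟨L, hL1, _, hLip⟩ := vBddLip k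
  exact contOn_of_lip (le_trans zero_le_one hL1) hLip

lemma contQ (k : ℕ) (c : ℝ) :
    ContinuousOn (fun x => max 0 (1 + v k (1 - x) - v k c)) (Icc (0:ℝ) 1) := by
  apply ContinuousOn.sup continuousOn_const
  apply ContinuousOn.sub _ continuousOn_const
  apply continuousOn_const.add
  apply (vCont k).comp (continuousOn_const.sub continuousOn_id)
  intro x hx
  simp only [Pi.sub_apply, id_eq, mem_Icc]
  exact ⟨by linarith [hx.1, hx.2], by linarith [hx.1, hx.2]⟩

/-- Alternate form of the recursion. -/
lemma vRec (k : ℕ) {c : ℝ} (hc : c ∈ Icc (0:ℝ) 1) :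
    v (k+1) c = v k c + ∫ x in c..(1:ℝ), max 0 (1 + v k (1 - x) - v k c) := by
  have h1 : (1:ℝ) ∈ Icc (0:ℝ) 1 := ⟨zero_le_one, le_refl 1⟩
  have hiq : IntervalIntegrable (fun x => max 0 (1 + v k (1 - x) - v k c)) volume c 1 :=
    intM (contQ k c) hc h1
  have hic : IntervalIntegrable (fun _ : ℝ => v k c) volume c 1 :=
    intervalIntegrable_const
  have : (∫ x in c..(1:ℝ), max (v k c) (1 + v k (1 - x)))
      = (∫ x in c..(1:ℝ), (v k c + max 0 (1 + v k (1 - x) - v k c))) := by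
    apply intervalIntegral.integral_congr
    intro x _
    exact max_eq_add _ _
  rw [show v (k+1) c = c * v k c + ∫ x in c..(1:ℝ), max (v k c) (1 + v k (1 - x)) from rfl,
    this, intervalIntegral.integral_add hic hiq, intervalIntegral.integral_const]
  simp only [smul_eq_mul]
  ring

/-- For every `k ≥ 1`, the value function `v k` is strictly decreasing on `[0,1]`. -/
theorem value_function_strictly_decreasing :
    ∀ k : ℕ, 1 ≤ k → ∀ y : ℝ, y ∈ Set.Ico (0:ℝ) 1 →
      ∀ ε : ℝ, 0 < ε → y + ε ≤ 1 → v k (y + ε) < v k y := by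
  intro k hk
  induction k, hk using Nat.le_induction with
  | base =>
    intro y hy ε hε hle
    have hv1 : ∀ t : ℝ, v 1 t = 1 - t := by
      intro t
      show t * v 0 t + (∫ x in t..(1:ℝ), max (v 0 t) (1 + v 0 (1 - x))) = 1 - t
      simp [v]
    rw [hv1, hv1]; linarith
  | succ k hk ih =>
    intro y hy ε hε hle
    have h1 : (1:ℝ) ∈ Icc (0:ℝ) 1 := ⟨zero_le_one, le_refl 1⟩
    set y' := y + ε with hy'
    have hymem : y ∈ Icc (0:ℝ) 1 := ⟨hy.1, by linarith⟩
    have hy'mem : y' ∈ Icc (0:ℝ) 1 := ⟨by linarith [hy.1], hle⟩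
    have hd : 0 < v k y - v k y' := sub_pos.2 (ih y hy ε hε hle)
    set d := v k y - v k y' with hdd
    set qy : ℝ → ℝ := fun x => max 0 (1 + v k (1 - x) - v k y) with hqy
    set qy' : ℝ → ℝ := fun x => max 0 (1 + v k (1 - x) - v k y') with hqy'
    have i1 : IntervalIntegrable qy volume y y' := intM (contQ k y) hymem hy'mem
    have i2 : IntervalIntegrable qy volume y' 1 := intM (contQ k y) hy'mem h1
    have i3 : IntervalIntegrable qy' volume y' 1 := intM (contQ k y') hy'mem h1
    have hsplit : (∫ x in y..(1:ℝ), qy x) = (∫ x in y..y', qy x) + ∫ x in y'..(1:ℝ), qy x :=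
      (intervalIntegral.integral_add_adjacent_intervals i1 i2).symm
    have hA : 0 ≤ ∫ x in y..y', qy x := by
      apply intervalIntegral.integral_nonneg (by linarith)
      intro u _
      exact le_max_left _ _
    have hmono : (∫ x in y'..(1:ℝ), (fun _ => -d) x) ≤ ∫ x in y'..(1:ℝ), (qy x - qy' x) := by
      apply intervalIntegral.integral_mono_on hy'mem.2 intervalIntegrable_const (i2.sub i3)
      intro x _
      have := max_zero_sub_le (1 + v k (1 - x)) d (v k y') hd.le
      have hvy : v k y = v k y' + d := by rw [hdd]; ring
      simp only [qy, qy', hvy]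
      linarith [this]
    have hconst : (∫ x in y'..(1:ℝ), (fun _ => -d) x) = (1 - y') * (-d) := by
      rw [intervalIntegral.integral_const]; simp
    have hsub : (∫ x in y'..(1:ℝ), (qy x - qy' x))
        = (∫ x in y'..(1:ℝ), qy x) - ∫ x in y'..(1:ℝ), qy' x :=
      intervalIntegral.integral_sub i2 i3
    have hrecy := vRec k hymem
    have hrecy' := vRec k hy'mem
    have hfinal : v (k+1) y - v (k+1) y'
        = d + (∫ x in y..y', qy x) + ((∫ x in y'..(1:ℝ), qy x) - ∫ x in y'..(1:ℝ), qy' x) := by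
      rw [hrecy, hrecy', hsplit]; simp only [qy, qy']; ring
    have hy'pos : 0 < y' := by have := hy.1; positivity
    have : 0 < v (k+1) y - v (k+1) y' := by
      rw [hfinal]
      have h2 : (∫ x in y'..(1:ℝ), qy x) - (∫ x in y'..(1:ℝ), qy' x) ≥ (1 - y') * (-d) := by
        rw [← hsub, ← hconst]; exact hmono
      nlinarith [mul_pos hy'pos hd, hy'mem.2]
    linarith
end

section
/- For every k ≥ 1 and every y ∈ [0,1], one has v_k(y) − v_k(2/3) ≤ v_k(0) − v_k(2/3) ≤ 1. -/
open MeasureTheory Set Filter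

/-- The optimal threshold function:
`g k y = inf {x ∈ [y,1] : v (k-1) y ≤ 1 + v (k-1) (1-x)}`. -/
noncomputable def g (k : ℕ) (y : ℝ) : ℝ :=
  sInf {x : ℝ | x ∈ Set.Icc y 1 ∧ v (k-1) y ≤ 1 + v (k-1) (1 - x)}

/-- The minimal fixed point `ξ k = inf {y ∈ [0,1] : g k y = y}`. -/
noncomputable def xi (k : ℕ) : ℝ :=
  sInf {y : ℝ | y ∈ Set.Icc (0:ℝ) 1 ∧ g k y = y}

lemma v_succ (k : ℕ) (y : ℝ) :
    v (k+1) y = y * v k y + ∫ x in y..(1:ℝ), max (v k y) (1 + v k (1 - x)) := rfl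

/-- Interval integrability of the (monotone) integrands. -/
lemma v_integrand_integrable (k : ℕ) (hk : AntitoneOn (v k) (Set.Icc (0:ℝ) 1))
    (c a b : ℝ) (ha : 0 ≤ a) (hab : a ≤ b) (hb : b ≤ 1) :
    IntervalIntegrable (fun x => max c (1 + v k (1 - x))) volume a b := by
  apply MonotoneOn.intervalIntegrable
  rw [Set.uIcc_of_le hab]
  intro s hs t ht hst
  refine max_le_max le_rfl (add_le_add_right ?_ 1)
  exact hk ⟨by linarith [ht.2, hb], by linarith [ht.1, ha]⟩
    ⟨by linarith [hs.2, hb], by linarith [hs.1, ha]⟩ (by linarith)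

/-- Each value function is antitone on `[0,1]`. -/
lemma v_antitone : ∀ k : ℕ, AntitoneOn (v k) (Set.Icc (0:ℝ) 1) := by
  intro k
  induction k with
  | zero => intro y hy y' hy' h; simp [v]
  | succ k ih =>
    intro y hy y' hy' h
    have h0y : (0:ℝ) ≤ y := hy.1
    have h0y' : (0:ℝ) ≤ y' := hy'.1
    have hy1 : y ≤ 1 := hy.2
    have hy'1 : y' ≤ 1 := hy'.2
    have hvv : v k y' ≤ v k y := ih hy hy' h
    rw [v_succ, v_succ]
    have hI1 : IntervalIntegrable (fun x => max (v k y) (1 + v k (1 - x))) volume y y' :=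
      v_integrand_integrable k ih _ _ _ h0y h hy'1
    have hI2 : IntervalIntegrable (fun x => max (v k y) (1 + v k (1 - x))) volume y' 1 :=
      v_integrand_integrable k ih _ _ _ h0y' hy'1 le_rfl
    have hI3 : IntervalIntegrable (fun x => max (v k y') (1 + v k (1 - x))) volume y' 1 :=
      v_integrand_integrable k ih _ _ _ h0y' hy'1 le_rfl
    have hsplit : (∫ x in y..(1:ℝ), max (v k y) (1 + v k (1 - x)))
        = (∫ x in y..y', max (v k y) (1 + v k (1 - x)))
          + ∫ x in y'..(1:ℝ), max (v k y) (1 + v k (1 - x)) :=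
      (intervalIntegral.integral_add_adjacent_intervals hI1 hI2).symm
    have hlow : (y' - y) * v k y ≤ ∫ x in y..y', max (v k y) (1 + v k (1 - x)) := by
      have := intervalIntegral.integral_mono_on h (intervalIntegrable_const (c := v k y)) hI1
        (fun x _ => le_max_left _ _)
      simpa using this
    have hcmp : (∫ x in y'..(1:ℝ), max (v k y') (1 + v k (1 - x)))
        ≤ ∫ x in y'..(1:ℝ), max (v k y) (1 + v k (1 - x)) :=
      intervalIntegral.integral_mono_on hy'1 hI3 hI2
        (fun x _ => max_le_max hvv le_rfl)
    have hmul : y' * v k y' ≤ y' * v k y := mul_le_mul_of_nonneg_left hvv h0y'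
    nlinarith [hlow, hcmp, hmul]

/-- The key bound `v k 0 ≤ 1 + v k (2/3)`. -/
lemma v_zero_le (k : ℕ) : v k 0 ≤ 1 + v k (2/3) := by
  induction k with
  | zero => simp [v]
  | succ k ih =>
    have hk := v_antitone k
    set c := v k (2/3) with hc
    have hm0 : (0:ℝ) ∈ Set.Icc (0:ℝ) 1 := by norm_num
    have hm23 : (2/3:ℝ) ∈ Set.Icc (0:ℝ) 1 := by norm_num
    have hF1a : IntervalIntegrable (fun x => max (1+c) (1 + v k (1 - x))) volume 0 (1/3) :=
      v_integrand_integrable k hk _ _ _ le_rfl (by norm_num) (by norm_num)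
    have hF1b : IntervalIntegrable (fun x => max (1+c) (1 + v k (1 - x))) volume (1/3) (2/3) :=
      v_integrand_integrable k hk _ _ _ (by norm_num) (by norm_num) (by norm_num)
    have hF1c : IntervalIntegrable (fun x => max (1+c) (1 + v k (1 - x))) volume (2/3) 1 :=
      v_integrand_integrable k hk _ _ _ (by norm_num) (by norm_num) le_rfl
    have hF1 : IntervalIntegrable (fun x => max (1+c) (1 + v k (1 - x))) volume 0 1 :=
      v_integrand_integrable k hk _ _ _ le_rfl (by norm_num) le_rfl
    have hF0 : IntervalIntegrable (fun x => max (v k 0) (1 + v k (1 - x))) volume 0 1 :=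
      v_integrand_integrable k hk _ _ _ le_rfl (by norm_num) le_rfl
    -- step 1 : compare with the majorant
    have h1 : (∫ x in (0:ℝ)..1, max (v k 0) (1 + v k (1 - x)))
        ≤ ∫ x in (0:ℝ)..1, max (1+c) (1 + v k (1 - x)) :=
      intervalIntegral.integral_mono_on (by norm_num) hF0 hF1
        (fun x _ => max_le_max ih le_rfl)
    -- split the majorant integral
    have h12 : (∫ x in (0:ℝ)..(2/3:ℝ), max (1+c) (1 + v k (1 - x)))
        = (∫ x in (0:ℝ)..(1/3:ℝ), max (1+c) (1 + v k (1 - x)))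
          + ∫ x in (1/3:ℝ)..(2/3:ℝ), max (1+c) (1 + v k (1 - x)) :=
      (intervalIntegral.integral_add_adjacent_intervals hF1a hF1b).symm
    have h01 : (∫ x in (0:ℝ)..(1:ℝ), max (1+c) (1 + v k (1 - x)))
        = (∫ x in (0:ℝ)..(2/3:ℝ), max (1+c) (1 + v k (1 - x)))
          + ∫ x in (2/3:ℝ)..(1:ℝ), max (1+c) (1 + v k (1 - x)) :=
      (intervalIntegral.integral_add_adjacent_intervals (hF1a.trans hF1b) hF1c).symm
    -- first piece: the integrand is the constant 1 + c
    have hA : (∫ x in (0:ℝ)..(1/3:ℝ), max (1+c) (1 + v k (1 - x))) = (1+c) / 3 := by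
      have he : Set.EqOn (fun x => max (1+c) (1 + v k (1 - x))) (fun _ => 1+c)
          (Set.uIcc (0:ℝ) (1/3)) := by
        intro x hx
        rw [Set.uIcc_of_le (by norm_num : (0:ℝ) ≤ 1/3)] at hx
        obtain ⟨hx1, hx2⟩ := hx
        have hvx : v k (1 - x) ≤ c :=
          hk hm23 (Set.mem_Icc.mpr ⟨by linarith, by linarith⟩) (by linarith)
        dsimp only
        rw [max_eq_left (by linarith : 1 + v k (1 - x) ≤ 1 + c)]
      rw [intervalIntegral.integral_congr he, intervalIntegral.integral_const, smul_eq_mul]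
      ring
    -- second piece: bounded by 2 + c
    have hB : (∫ x in (1/3:ℝ)..(2/3:ℝ), max (1+c) (1 + v k (1 - x))) ≤ (2+c)/3 := by
      have hmono := intervalIntegral.integral_mono_on (by norm_num : (1/3:ℝ) ≤ 2/3)
        hF1b (intervalIntegrable_const (c := 2+c)) ?_
      · rw [intervalIntegral.integral_const, smul_eq_mul] at hmono
        linarith
      · intro x hx
        obtain ⟨hx1, hx2⟩ := hx
        have hvx : v k (1 - x) ≤ v k 0 :=
          hk hm0 (Set.mem_Icc.mpr ⟨by linarith, by linarith⟩) (by linarith)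
        exact max_le (by linarith) (by linarith)
    -- third piece: coincides with the integral appearing in `v (k+1) (2/3)`
    have hC : (∫ x in (2/3:ℝ)..(1:ℝ), max (1+c) (1 + v k (1 - x)))
        = ∫ x in (2/3:ℝ)..(1:ℝ), max c (1 + v k (1 - x)) := by
      apply intervalIntegral.integral_congr
      intro x hx
      rw [Set.uIcc_of_le (by norm_num : (2/3:ℝ) ≤ 1)] at hx
      obtain ⟨hx1, hx2⟩ := hx
      have hvx : c ≤ v k (1 - x) :=
        hk (Set.mem_Icc.mpr ⟨by linarith, by linarith⟩) hm23 (by linarith)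
      dsimp only
      rw [max_eq_right (by linarith : 1 + c ≤ 1 + v k (1 - x)),
        max_eq_right (by linarith : c ≤ 1 + v k (1 - x))]
    have e0 : v (k+1) 0 = ∫ x in (0:ℝ)..1, max (v k 0) (1 + v k (1 - x)) := by
      rw [v_succ]; ring
    have e23 : v (k+1) (2/3) = (2/3) * c + ∫ x in (2/3:ℝ)..(1:ℝ), max c (1 + v k (1 - x)) := by
      rw [v_succ]
    rw [e0, e23]
    rw [h01, h12, hA, hC] at h1
    linarith

/-- For every `k ≥ 1` and every `y ∈ [0,1]`,
`v k y - v k (2/3) ≤ v k 0 - v k (2/3) ≤ 1`. -/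
theorem value_function_initial_bound :
    ∀ k : ℕ, 1 ≤ k → ∀ y : ℝ, y ∈ Set.Icc (0:ℝ) 1 →
      v k y - v k (2/3) ≤ v k 0 - v k (2/3) ∧ v k 0 - v k (2/3) ≤ 1 := by
  intro k _ y hy
  constructor
  · have : v k y ≤ v k 0 := v_antitone k (by norm_num) hy hy.1
    linarith
  · linarith [v_zero_le k]
end

section
/- For every k ≥ 3, there is a unique y* ∈ [0,1] such that v_{k−1}(y*) − v_{k−1}(1−y*) = 1, and this unique solution equals the minimal fixed point ξ_k = inf{y ∈ [0,1] : g_k(y) = y}. -/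
open MeasureTheory Set Filter

lemma v_zero (y : ℝ) : v 0 y = 0 := rfl

lemma v_cont (k : ℕ) : Continuous (v k) := by
  induction k with
  | zero => exact continuous_const
  | succ k ih =>
    have hF : Continuous (Function.uncurry fun y x : ℝ => max (v k y) (1 + v k (1 - x))) :=
      Continuous.max (ih.comp continuous_fst)
        (continuous_const.add (ih.comp (continuous_const.sub continuous_snd)))
    have h1 : Continuous fun y : ℝ => ∫ x in (1:ℝ)..y, max (v k y) (1 + v k (1 - x)) :=
      intervalIntegral.continuous_parametric_intervalIntegral_of_continuous hF continuous_id
    have h2 : Continuous fun y : ℝ => ∫ x in y..(1:ℝ), max (v k y) (1 + v k (1 - x)) := by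
      have : (fun y : ℝ => ∫ x in y..(1:ℝ), max (v k y) (1 + v k (1 - x))) =
          fun y : ℝ => -∫ x in (1:ℝ)..y, max (v k y) (1 + v k (1 - x)) := by
        funext y; rw [intervalIntegral.integral_symm]
      rw [this]; exact h1.neg
    have : Continuous fun y : ℝ =>
        y * v k y + ∫ x in y..(1:ℝ), max (v k y) (1 + v k (1 - x)) :=
      (continuous_id.mul ih).add h2
    exact this

lemma v_intable (k : ℕ) (c : ℝ) (a b : ℝ) :
    IntervalIntegrable (fun x => max c (1 + v k (1 - x))) volume a b :=
  (Continuous.max continuous_const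
    (continuous_const.add ((v_cont k).comp (continuous_const.sub continuous_id)))).intervalIntegrable a b

lemma v_one : ∀ k : ℕ, v k 1 = 0 := by
  intro k
  induction k with
  | zero => rfl
  | succ k ih => rw [v_succ, intervalIntegral.integral_same, ih]; ring

lemma v_step (k : ℕ) (hanti : ∀ y y' : ℝ, 0 ≤ y → y ≤ y' → y' ≤ 1 → v k y' ≤ v k y)
    (y y' : ℝ) (h0 : 0 ≤ y) (h : y ≤ y') (h1 : y' ≤ 1) :
    v (k+1) y' + y' * (v k y - v k y') ≤ v (k+1) y := by
  have hsplit : (∫ x in y..(1:ℝ), max (v k y) (1 + v k (1 - x))) =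
      (∫ x in y..y', max (v k y) (1 + v k (1 - x))) +
      ∫ x in y'..(1:ℝ), max (v k y) (1 + v k (1 - x)) :=
    (intervalIntegral.integral_add_adjacent_intervals (v_intable k _ _ _) (v_intable k _ _ _)).symm
  have hA : (y' - y) * v k y ≤ ∫ x in y..y', max (v k y) (1 + v k (1 - x)) := by
    have := intervalIntegral.integral_mono_on (μ := volume) h
      (intervalIntegrable_const (c := v k y)) (v_intable k (v k y) y y')
      (fun x _ => le_max_left (v k y) (1 + v k (1 - x)))
    simpa [smul_eq_mul] using this
  have hB : (∫ x in y'..(1:ℝ), max (v k y') (1 + v k (1 - x))) ≤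
      ∫ x in y'..(1:ℝ), max (v k y) (1 + v k (1 - x)) :=
    intervalIntegral.integral_mono_on h1 (v_intable k _ _ _) (v_intable k _ _ _)
      (fun x _ => max_le_max (hanti y y' h0 h h1) le_rfl)
  rw [v_succ, v_succ, hsplit]
  nlinarith [hanti y y' h0 h h1]

lemma v_anti : ∀ k : ℕ, ∀ y y' : ℝ, 0 ≤ y → y ≤ y' → y' ≤ 1 → v k y' ≤ v k y := by
  intro k
  induction k with
  | zero => intro y y' _ _ _; exact le_rfl
  | succ k ih =>
    intro y y' h0 h h1
    have := v_step k ih y y' h0 h h1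
    nlinarith [ih y y' h0 h h1, h0.trans h]

lemma v_one_eq (y : ℝ) : v 1 y = 1 - y := by
  rw [v_succ]
  have : (fun x : ℝ => max (v 0 y) (1 + v 0 (1 - x))) = fun _ : ℝ => (1:ℝ) := by
    funext x; show max 0 (1 + 0) = 1; norm_num
  rw [this]
  show y * 0 + _ = _
  rw [intervalIntegral.integral_const]
  simp

lemma v_strict : ∀ k : ℕ, 1 ≤ k → ∀ y y' : ℝ, 0 ≤ y → y < y' → y' ≤ 1 → v k y' < v k y := by
  intro k
  induction k with
  | zero => omega
  | succ k ih =>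
    intro _ y y' h0 h h1
    rcases Nat.eq_zero_or_pos k with hk | hk
    · subst hk; rw [v_one_eq, v_one_eq]; linarith
    · have hq := v_step k (fun a b ha hab hb => v_anti k a b ha hab hb) y y' h0 h.le h1
      have hs := ih hk y y' h0 h h1
      nlinarith [h0.trans_lt h]

lemma v_nonneg : ∀ k : ℕ, ∀ y : ℝ, 0 ≤ y → y ≤ 1 → 0 ≤ v k y := by
  intro k
  induction k with
  | zero => intro y _ _; exact le_rfl
  | succ k ih =>
    intro y h0 h1
    have hA : (1 - y) * v k y ≤ ∫ x in y..(1:ℝ), max (v k y) (1 + v k (1 - x)) := by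
      have := intervalIntegral.integral_mono_on (μ := volume) h1
        (intervalIntegrable_const (c := v k y)) (v_intable k (v k y) y 1)
        (fun x _ => le_max_left (v k y) (1 + v k (1 - x)))
      simpa [smul_eq_mul] using this
    rw [v_succ]
    nlinarith [ih y h0 h1]

lemma v_zero_ge : ∀ k : ℕ, 1 ≤ k → 1 ≤ v k 0 := by
  intro k hk
  obtain ⟨k, rfl⟩ : ∃ m, k = m + 1 := ⟨k - 1, by omega⟩
  rw [v_succ]
  have hA : (1 - 0) * (1:ℝ) ≤ ∫ x in (0:ℝ)..1, max (v k 0) (1 + v k (1 - x)) := by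
    have := intervalIntegral.integral_mono_on (μ := volume) zero_le_one
      (intervalIntegrable_const (c := (1:ℝ))) (v_intable k (v k 0) 0 1)
      (fun x hx => by
        have := v_nonneg k (1 - x) (by linarith [hx.2]) (by linarith [hx.1])
        calc (1:ℝ) ≤ 1 + v k (1 - x) := by linarith
        _ ≤ _ := le_max_right _ _)
    simpa [smul_eq_mul] using this
  nlinarith

/-- For every `k ≥ 3`, there is a unique `y* ∈ [0,1]` with
`v (k-1) y* - v (k-1) (1-y*) = 1`, and this unique solution is the minimal
fixed point `ξ k`. -/
theorem minimal_fixed_point_characterization :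
    ∀ k : ℕ, 3 ≤ k →
      (∃! y : ℝ, y ∈ Set.Icc (0:ℝ) 1 ∧ v (k-1) y - v (k-1) (1 - y) = 1) ∧
      xi k ∈ Set.Icc (0:ℝ) 1 ∧ v (k-1) (xi k) - v (k-1) (1 - xi k) = 1 := by
  intro k hk
  set m := k - 1 with hm
  have hm1 : 1 ≤ m := by omega
  set d : ℝ → ℝ := fun y => v m y - v m (1 - y) with hd
  have hdc : Continuous d := (v_cont m).sub ((v_cont m).comp (continuous_const.sub continuous_id))
  have hvm0 : 1 ≤ v m 0 := v_zero_ge m hm1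
  have hd0 : d 0 = v m 0 := by simp [hd, v_one]
  have hd1 : d 1 = -v m 0 := by simp [hd, v_one]
  -- strict antitonicity of d on [0,1]
  have hstrict : ∀ a b : ℝ, 0 ≤ a → a < b → b ≤ 1 → d b < d a := by
    intro a b ha hab hb
    have h1 : v m b < v m a := v_strict m hm1 a b ha hab hb
    have h2 : v m (1 - a) < v m (1 - b) := v_strict m hm1 (1 - b) (1 - a)
      (by linarith) (by linarith) (by linarith)
    simp only [hd]; linarith
  -- existence via IVT
  have h1mem : (1:ℝ) ∈ Icc (d 1) (d 0) := by rw [hd0, hd1]; constructor <;> linarith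
  obtain ⟨ys, hys, hdys⟩ := intermediate_value_Icc' (zero_le_one) hdc.continuousOn h1mem
  -- uniqueness
  have huniq : ∀ z : ℝ, z ∈ Icc (0:ℝ) 1 → d z = 1 → z = ys := by
    intro z hz hdz
    rcases lt_trichotomy z ys with h | h | h
    · have := hstrict z ys hz.1 h hys.2; rw [hdz, hdys] at this; linarith
    · exact h
    · have := hstrict ys z hys.1 h hz.2; rw [hdz, hdys] at this; linarith
  -- characterize the fixed-point set of g
  have hTclosed : ∀ y : ℝ, IsClosed {x : ℝ | x ∈ Set.Icc y 1 ∧ v m y ≤ 1 + v m (1 - x)} := by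
    intro y
    exact isClosed_Icc.inter (isClosed_le continuous_const
      (continuous_const.add ((v_cont m).comp (continuous_const.sub continuous_id))))
  have hTne : ∀ y : ℝ, 0 ≤ y → y ≤ 1 →
      (1:ℝ) ∈ {x : ℝ | x ∈ Set.Icc y 1 ∧ v m y ≤ 1 + v m (1 - x)} := by
    intro y h0 h1
    refine ⟨⟨h1, le_rfl⟩, ?_⟩
    have h := v_anti m 0 y le_rfl h0 h1
    simp only [sub_self]
    linarith
  -- g k y = y iff d y ≤ 1, for y in [0,1]
  have hgiff : ∀ y : ℝ, 0 ≤ y → y ≤ 1 → (g k y = y ↔ d y ≤ 1) := by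
    intro y h0 h1
    have hbdd : BddBelow {x : ℝ | x ∈ Set.Icc y 1 ∧ v m y ≤ 1 + v m (1 - x)} :=
      ⟨y, fun x hx => hx.1.1⟩
    have hgm : g k y = sInf {x : ℝ | x ∈ Set.Icc y 1 ∧ v m y ≤ 1 + v m (1 - x)} := rfl
    constructor
    · intro hgy
      have hmem := (hTclosed y).csInf_mem ⟨1, hTne y h0 h1⟩ hbdd
      rw [← hgm, hgy] at hmem
      simp only [hd]; linarith [hmem.2]
    · intro hdy
      have hymem : y ∈ {x : ℝ | x ∈ Set.Icc y 1 ∧ v m y ≤ 1 + v m (1 - x)} := by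
        refine ⟨⟨le_rfl, h1⟩, ?_⟩
        simp only [hd] at hdy; linarith
      rw [hgm]
      exact le_antisymm (csInf_le hbdd hymem)
        (le_csInf ⟨1, hTne y h0 h1⟩ fun x hx => hx.1.1)
  -- the fixed-point set equals Icc ys 1
  have hset : {y : ℝ | y ∈ Set.Icc (0:ℝ) 1 ∧ g k y = y} = Icc ys 1 := by
    ext z
    simp only [mem_setOf_eq, mem_Icc]
    constructor
    · rintro ⟨⟨hz0, hz1⟩, hgz⟩
      have hdz : d z ≤ 1 := (hgiff z hz0 hz1).1 hgz
      refine ⟨?_, hz1⟩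
      by_contra hc
      push_neg at hc
      have := hstrict z ys hz0 hc hys.2
      rw [hdys] at this; linarith
    · rintro ⟨hz0, hz1⟩
      have hz0' : (0:ℝ) ≤ z := le_trans hys.1 hz0
      refine ⟨⟨hz0', hz1⟩, (hgiff z hz0' hz1).2 ?_⟩
      rcases eq_or_lt_of_le hz0 with h | h
      · rw [← h, hdys]
      · have := hstrict ys z hys.1 h hz1
        rw [hdys] at this; linarith
  have hxi : xi k = ys := by
    rw [xi, hset, csInf_Icc hys.2]
  refine ⟨⟨ys, ⟨hys, hdys⟩, fun z hz => huniq z hz.1 hz.2⟩, ?_, ?_⟩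
  · rw [hxi]; exact hys
  · rw [hxi]; exact hdys
end

section
/- Each value function v_k is differentiable on [0,1], and for every k ≥ 1 and every y ∈ [0, 1/3], the derivatives satisfy −1 ≤ v_k'(y) ≤ v_{k+1}'(y) ≤ 0. -/
open MeasureTheory Set Filter

namespace VAux

/-- Working domain, symmetric under `x ↦ 1 - x`. -/
def J : Set ℝ := Icc (-(1:ℝ)/2) (3/2)

lemma J_symm {x : ℝ} (hx : x ∈ J) : 1 - x ∈ J := by
  simp only [J, mem_Icc] at *; constructor <;> linarith [hx.1, hx.2]

lemma Icc01_subset_J : Icc (0:ℝ) 1 ⊆ J := by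
  intro x hx; simp only [J, mem_Icc] at *; constructor <;> linarith [hx.1, hx.2]

lemma one_mem_J : (1:ℝ) ∈ J := by simp [J]; norm_num

lemma uIcc_subset_J {a b : ℝ} (ha : a ∈ J) (hb : b ∈ J) : Set.uIcc a b ⊆ J := by
  have : J = Set.uIcc (-(1:ℝ)/2) (3/2) := by
    rw [Set.uIcc_of_le (by norm_num)]; rfl
  rw [this]
  exact Set.uIcc_subset_uIcc (this ▸ ha) (this ▸ hb)

end VAux

namespace VAux

lemma abs_max_sub_max_le {a b c : ℝ} : |max a c - max b c| ≤ |a - b| := by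
  have := abs_max_sub_max_le_max a c b c
  simpa using this

end VAux

namespace VAux

lemma contOn_of_lip {f : ℝ → ℝ} {K : ℝ} (hK : 0 ≤ K)
    (h : ∀ y ∈ J, ∀ z ∈ J, |f y - f z| ≤ K * |y - z|) : ContinuousOn f J := by
  have : LipschitzOnWith (Real.toNNReal K) f J := by
    rw [lipschitzOnWith_iff_dist_le_mul]
    intro x hx y hy
    rw [Real.dist_eq, Real.dist_eq]
    calc |f x - f y| ≤ K * |x - y| := h x hx y hy
    _ = (Real.toNNReal K) * |x - y| := by rw [Real.coe_toNNReal K hK]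
  exact this.continuousOn

lemma integrand_int {f : ℝ → ℝ} (hf : ContinuousOn f J) (c : ℝ) {a b : ℝ}
    (ha : a ∈ J) (hb : b ∈ J) :
    IntervalIntegrable (fun x => max c (1 + f (1 - x))) volume a b := by
  apply ContinuousOn.intervalIntegrable
  have h1 : ContinuousOn (fun x : ℝ => 1 - x) (Set.uIcc a b) :=
    continuousOn_const.sub continuousOn_id
  have h2 : ContinuousOn (fun x => f (1 - x)) (Set.uIcc a b) :=
    ContinuousOn.comp hf h1 (fun x hx => J_symm (uIcc_subset_J ha hb hx))
  exact continuousOn_const.sup (continuousOn_const.add h2)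

/-- Boundedness and Lipschitz estimates on `J`, by induction. -/
lemma basics : ∀ k : ℕ, ∃ M K : ℝ, 0 ≤ M ∧ 0 ≤ K ∧
    (∀ y ∈ J, |v k y| ≤ M) ∧ (∀ y ∈ J, ∀ z ∈ J, |v k y - v k z| ≤ K * |y - z|) := by
  intro k
  induction k with
  | zero => exact ⟨0, 0, le_refl 0, le_refl 0, by simp [v], by simp [v]⟩
  | succ k ih =>
    obtain ⟨M, K, hM, hK, hbd, hlip⟩ := ih
    have hcont : ContinuousOn (v k) J := contOn_of_lip hK hlip
    have hintg : ∀ (c a b : ℝ), a ∈ J → b ∈ J →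
        IntervalIntegrable (fun x => max c (1 + v k (1 - x))) volume a b :=
      fun c a b ha hb => integrand_int hcont c ha hb
    have hbd' : ∀ (c : ℝ), |c| ≤ M → ∀ x ∈ J, |max c (1 + v k (1 - x))| ≤ 1 + M := by
      intro c hc x hx
      have h1 : |v k (1 - x)| ≤ M := hbd _ (J_symm hx)
      rw [abs_le] at *
      constructor
      · have := le_max_left c (1 + v k (1-x)); nlinarith [hc.1]
      · rcases max_cases c (1 + v k (1-x)) with ⟨h,_⟩|⟨h,_⟩ <;> rw [h] <;> nlinarith [hc.2, h1.2]
    refine ⟨(3/2)*M + 2*(1+M), (3/2)*K + M + 2*K + (1+M), by linarith, by linarith, ?_, ?_⟩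
    · intro y hy
      have hyJ := hy
      simp only [J, mem_Icc] at hy
      have h1 : |y * v k y| ≤ (3/2) * M := by
        rw [abs_mul]
        have h2 : |y| ≤ 3/2 := by rw [abs_le]; constructor <;> linarith
        have h3 := hbd y hyJ
        nlinarith [abs_nonneg y, abs_nonneg (v k y)]
      have h2 : |∫ x in y..(1:ℝ), max (v k y) (1 + v k (1 - x))| ≤ (1+M) * |1 - y| := by
        rw [← Real.norm_eq_abs]
        apply intervalIntegral.norm_integral_le_of_norm_le_const
        intro x hx
        have hxJ : x ∈ J := uIcc_subset_J hyJ one_mem_J (Set.uIoc_subset_uIcc hx)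
        exact hbd' _ (hbd y hyJ) x hxJ
      have h3 : |1 - y| ≤ 2 := by rw [abs_le]; constructor <;> linarith
      show |y * v k y + _| ≤ _
      calc |y * v k y + _| ≤ |y * v k y| + |∫ x in y..(1:ℝ), max (v k y) (1 + v k (1 - x))| :=
            abs_add_le _ _
        _ ≤ (3/2)*M + 2*(1+M) := by nlinarith [h1, h2, h3, abs_nonneg (∫ x in y..(1:ℝ), max (v k y) (1 + v k (1 - x))), hM]
    · intro y hy z hz
      have h1 : |y * v k y - z * v k z| ≤ ((3/2)*K + M) * |y - z| := by
        have e : y * v k y - z * v k z = y * (v k y - v k z) + (y - z) * v k z := by ring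
        rw [e]
        have hy' : |y| ≤ 3/2 := by
          simp only [J, mem_Icc] at hy; rw [abs_le]; constructor <;> linarith [hy.1, hy.2]
        calc |y * (v k y - v k z) + (y - z) * v k z|
            ≤ |y * (v k y - v k z)| + |(y - z) * v k z| := abs_add_le _ _
          _ = |y| * |v k y - v k z| + |y - z| * |v k z| := by rw [abs_mul, abs_mul]
          _ ≤ ((3/2)*K + M) * |y - z| := by
              nlinarith [hlip y hy z hz, hbd z hz, abs_nonneg y, abs_nonneg (v k y - v k z),
                abs_nonneg (y - z), abs_nonneg (v k z), hy']
      have key : |(∫ x in y..(1:ℝ), max (v k y) (1 + v k (1 - x))) -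
           (∫ x in z..(1:ℝ), max (v k z) (1 + v k (1 - x)))| ≤ (2*K + (1+M)) * |y - z| := by
        have e1 : (∫ x in y..(1:ℝ), max (v k y) (1 + v k (1 - x)))
            = (∫ x in y..z, max (v k y) (1 + v k (1 - x)))
              + (∫ x in z..(1:ℝ), max (v k y) (1 + v k (1 - x))) :=
          (intervalIntegral.integral_add_adjacent_intervals (hintg _ _ _ hy hz)
            (hintg _ _ _ hz one_mem_J)).symm
        have e2 : (∫ x in y..(1:ℝ), max (v k y) (1 + v k (1 - x))) -
            (∫ x in z..(1:ℝ), max (v k z) (1 + v k (1 - x)))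
            = (∫ x in y..z, max (v k y) (1 + v k (1 - x)))
              + ∫ x in z..(1:ℝ),
                  (max (v k y) (1 + v k (1 - x)) - max (v k z) (1 + v k (1 - x))) := by
          rw [intervalIntegral.integral_sub (hintg _ _ _ hz one_mem_J) (hintg _ _ _ hz one_mem_J), e1]
          ring
        rw [e2]
        have h3 : |∫ x in y..z, max (v k y) (1 + v k (1 - x))| ≤ (1+M) * |z - y| := by
          rw [← Real.norm_eq_abs]
          apply intervalIntegral.norm_integral_le_of_norm_le_const
          intro x hx
          exact hbd' _ (hbd y hy) x (uIcc_subset_J hy hz (Set.uIoc_subset_uIcc hx))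
        have h4 : |∫ x in z..(1:ℝ),
            (max (v k y) (1 + v k (1 - x)) - max (v k z) (1 + v k (1 - x)))|
            ≤ (K * |y - z|) * |1 - z| := by
          rw [← Real.norm_eq_abs]
          apply intervalIntegral.norm_integral_le_of_norm_le_const
          intro x hx
          calc ‖max (v k y) (1 + v k (1 - x)) - max (v k z) (1 + v k (1 - x))‖
              ≤ |v k y - v k z| := abs_max_sub_max_le
            _ ≤ K * |y - z| := hlip y hy z hz
        have h5 : |1 - z| ≤ 2 := by
          simp only [J, mem_Icc] at hz; rw [abs_le]; constructor <;> linarith [hz.1, hz.2]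
        have h6 : |z - y| = |y - z| := abs_sub_comm z y
        calc |_ + _| ≤ |∫ x in y..z, max (v k y) (1 + v k (1 - x))|
              + |∫ x in z..(1:ℝ),
                  (max (v k y) (1 + v k (1 - x)) - max (v k z) (1 + v k (1 - x)))| := abs_add_le _ _
          _ ≤ (2*K + (1+M)) * |y - z| := by
              nlinarith [h3, h4, h5, h6, abs_nonneg (y - z), hK,
                mul_nonneg hK (abs_nonneg (y - z))]
      show |(y * v k y + _) - (z * v k z + _)| ≤ _
      have e : (y * v k y + (∫ x in y..(1:ℝ), max (v k y) (1 + v k (1 - x))))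
          - (z * v k z + (∫ x in z..(1:ℝ), max (v k z) (1 + v k (1 - x))))
          = (y * v k y - z * v k z) + ((∫ x in y..(1:ℝ), max (v k y) (1 + v k (1 - x)))
              - (∫ x in z..(1:ℝ), max (v k z) (1 + v k (1 - x)))) := by ring
      rw [e]
      calc |_ + _| ≤ |y * v k y - z * v k z| + |(∫ x in y..(1:ℝ), max (v k y) (1 + v k (1 - x)))
              - (∫ x in z..(1:ℝ), max (v k z) (1 + v k (1 - x)))| := abs_add_le _ _
        _ ≤ ((3/2)*K + M) * |y - z| + (2*K + (1+M)) * |y - z| := add_le_add h1 key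
        _ = ((3/2)*K + M + 2*K + (1+M)) * |y - z| := by ring

lemma vCont (k : ℕ) : ContinuousOn (v k) J := by
  obtain ⟨M, K, hM, hK, hbd, hlip⟩ := basics k
  exact contOn_of_lip hK hlip

/-- integrability of the recursion integrand over subintervals of `J`. -/
lemma vInt (k : ℕ) (c : ℝ) {a b : ℝ} (ha : a ∈ J) (hb : b ∈ J) :
    IntervalIntegrable (fun x => max c (1 + v k (1 - x))) volume a b :=
  integrand_int (vCont k) c ha hb

/-- integrability of compositions `u ↦ max c (1 + v k u)`. -/
lemma vInt' (k : ℕ) (c : ℝ) {a b : ℝ} (ha : a ∈ J) (hb : b ∈ J) :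
    IntervalIntegrable (fun u => max c (1 + v k u)) volume a b := by
  apply ContinuousOn.intervalIntegrable
  exact continuousOn_const.sup
    (continuousOn_const.add ((vCont k).mono (uIcc_subset_J ha hb)))

lemma vIntPlain (k : ℕ) {a b : ℝ} (ha : a ∈ J) (hb : b ∈ J) :
    IntervalIntegrable (v k) volume a b :=
  ((vCont k).mono (uIcc_subset_J ha hb)).intervalIntegrable

end VAux

namespace VAux

lemma v_zero (y : ℝ) : v 0 y = 0 := rfl

lemma v_one (y : ℝ) : v 1 y = 1 - y := by
  show y * v 0 y + ∫ x in y..(1:ℝ), max (v 0 y) (1 + v 0 (1 - x)) = 1 - y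
  simp only [v_zero]
  norm_num

lemma v_two {y : ℝ} (hy : y ∈ Icc (0:ℝ) 1) : v 2 y = 3/2 - (3/2) * y^2 := by
  show y * v 1 y + ∫ x in y..(1:ℝ), max (v 1 y) (1 + v 1 (1 - x)) = 3/2 - (3/2) * y^2
  have e : ∀ x : ℝ, x ∈ Set.uIcc y 1 → max (v 1 y) (1 + v 1 (1 - x)) = 1 + x := by
    intro x hx
    rw [v_one, v_one]
    have hsub : Set.uIcc y 1 ⊆ Icc 0 1 := by
      rw [Set.uIcc_of_le hy.2]; exact Icc_subset_Icc hy.1 le_rfl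
    have hx' := hsub hx
    rw [max_eq_right (by simp only [mem_Icc] at hx'; nlinarith [hy.1, hy.2, hx'.1, hx'.2])]
    ring_nf
  rw [intervalIntegral.integral_congr e, v_one]
  have : (∫ x in y..(1:ℝ), (1 + x)) = (1 - y) + (1^2 - y^2)/2 := by
    rw [intervalIntegral.integral_add intervalIntegrable_const intervalIntegral.intervalIntegrable_id]
    rw [intervalIntegral.integral_const, integral_id]
    norm_num
  rw [this]; ring

/-- `v k` is antitone on `[0,1]` (non-strict, all `k`). -/
lemma v_anti : ∀ k : ℕ, ∀ a ∈ Icc (0:ℝ) 1, ∀ b ∈ Icc (0:ℝ) 1, a ≤ b → v k b ≤ v k a := by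
  intro k
  induction k with
  | zero => intro a _ b _ _; simp [v_zero]
  | succ k ih =>
    intro a ha b hb hab
    have haJ := Icc01_subset_J ha
    have hbJ := Icc01_subset_J hb
    show b * v k b + _ ≤ a * v k a + _
    have h1 : b * v k b ≤ a * v k a + (b - a) * v k a := by
      have := ih a ha b hb hab
      nlinarith [ha.1, hb.1, hab]
    have e1 : (∫ x in a..(1:ℝ), max (v k a) (1 + v k (1 - x)))
        = (∫ x in a..b, max (v k a) (1 + v k (1 - x)))
          + (∫ x in b..(1:ℝ), max (v k a) (1 + v k (1 - x))) :=
      (intervalIntegral.integral_add_adjacent_intervals (vInt k _ haJ hbJ)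
        (vInt k _ hbJ one_mem_J)).symm
    have h2 : (∫ x in b..(1:ℝ), max (v k b) (1 + v k (1 - x)))
        ≤ ∫ x in b..(1:ℝ), max (v k a) (1 + v k (1 - x)) := by
      apply intervalIntegral.integral_mono_on hb.2 (vInt k _ hbJ one_mem_J) (vInt k _ hbJ one_mem_J)
      intro x _
      exact max_le_max (ih a ha b hb hab) le_rfl
    have h3 : (b - a) * v k a ≤ ∫ x in a..b, max (v k a) (1 + v k (1 - x)) := by
      have : (b - a) * v k a = ∫ _ in a..b, v k a := by
        rw [intervalIntegral.integral_const, smul_eq_mul]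
      rw [this]
      apply intervalIntegral.integral_mono_on hab
        (intervalIntegrable_const) (vInt k _ haJ hbJ)
      intro x _
      exact le_max_left _ _
    calc b * v k b + (∫ x in b..(1:ℝ), max (v k b) (1 + v k (1 - x)))
        ≤ (a * v k a + (b - a) * v k a) + (∫ x in b..(1:ℝ), max (v k a) (1 + v k (1 - x))) :=
          add_le_add h1 h2
      _ ≤ a * v k a + ((∫ x in a..b, max (v k a) (1 + v k (1 - x)))
            + (∫ x in b..(1:ℝ), max (v k a) (1 + v k (1 - x)))) := by linarith [h3]
      _ = a * v k a + (∫ x in a..(1:ℝ), max (v k a) (1 + v k (1 - x))) := by rw [← e1]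

/-- `v k` is strictly antitone on `[0,1]` for `k ≥ 1`. -/
lemma v_strictAnti : ∀ k : ℕ, 1 ≤ k → ∀ a ∈ Icc (0:ℝ) 1, ∀ b ∈ Icc (0:ℝ) 1,
    a < b → v k b < v k a := by
  intro k
  induction k with
  | zero => omega
  | succ k ih =>
    intro _ a ha b hb hab
    rcases Nat.eq_or_lt_of_le (Nat.one_le_iff_ne_zero.mpr (Nat.succ_ne_zero k)) with h1 | h1
    · -- k + 1 = 1
      have : k = 0 := by omega
      subst this
      rw [v_one, v_one]; linarith
    · have hk1 : 1 ≤ k := by omega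
      have haJ := Icc01_subset_J ha
      have hbJ := Icc01_subset_J hb
      show b * v k b + _ < a * v k a + _
      have hb0 : 0 < b := lt_of_le_of_lt ha.1 hab
      have hstrict : v k b < v k a := ih hk1 a ha b hb hab
      have h1 : b * v k b < a * v k a + (b - a) * v k a := by nlinarith [ha.1]
      have e1 : (∫ x in a..(1:ℝ), max (v k a) (1 + v k (1 - x)))
          = (∫ x in a..b, max (v k a) (1 + v k (1 - x)))
            + (∫ x in b..(1:ℝ), max (v k a) (1 + v k (1 - x))) :=
        (intervalIntegral.integral_add_adjacent_intervals (vInt k _ haJ hbJ)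
          (vInt k _ hbJ one_mem_J)).symm
      have h2 : (∫ x in b..(1:ℝ), max (v k b) (1 + v k (1 - x)))
          ≤ ∫ x in b..(1:ℝ), max (v k a) (1 + v k (1 - x)) := by
        apply intervalIntegral.integral_mono_on hb.2 (vInt k _ hbJ one_mem_J)
          (vInt k _ hbJ one_mem_J)
        intro x _
        exact max_le_max (le_of_lt hstrict) le_rfl
      have h3 : (b - a) * v k a ≤ ∫ x in a..b, max (v k a) (1 + v k (1 - x)) := by
        have : (b - a) * v k a = ∫ _ in a..b, v k a := by
          rw [intervalIntegral.integral_const, smul_eq_mul]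
        rw [this]
        apply intervalIntegral.integral_mono_on (le_of_lt hab)
          (intervalIntegrable_const) (vInt k _ haJ hbJ)
        intro x _
        exact le_max_left _ _
      calc b * v k b + (∫ x in b..(1:ℝ), max (v k b) (1 + v k (1 - x)))
          < (a * v k a + (b - a) * v k a) + (∫ x in b..(1:ℝ), max (v k a) (1 + v k (1 - x))) := by
            linarith [h2]
        _ ≤ a * v k a + ((∫ x in a..b, max (v k a) (1 + v k (1 - x)))
              + (∫ x in b..(1:ℝ), max (v k a) (1 + v k (1 - x)))) := by linarith [h3]
        _ = a * v k a + (∫ x in a..(1:ℝ), max (v k a) (1 + v k (1 - x))) := by rw [← e1]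

/-- `v` is monotone in `k` on `[0,1]`. -/
lemma v_mono_k : ∀ k : ℕ, ∀ y ∈ Icc (0:ℝ) 1, v k y ≤ v (k+1) y := by
  intro k
  induction k with
  | zero =>
    intro y hy; rw [v_zero, v_one]; linarith [hy.2]
  | succ k ih =>
    intro y hy
    have hyJ := Icc01_subset_J hy
    show y * v k y + _ ≤ y * v (k+1) y + _
    have h1 : y * v k y ≤ y * v (k+1) y := by nlinarith [ih y hy, hy.1]
    have h2 : (∫ x in y..(1:ℝ), max (v k y) (1 + v k (1 - x)))
        ≤ ∫ x in y..(1:ℝ), max (v (k+1) y) (1 + v (k+1) (1 - x)) := by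
      apply intervalIntegral.integral_mono_on hy.2 (vInt k _ hyJ one_mem_J)
        (vInt (k+1) _ hyJ one_mem_J)
      intro x hx
      have hx1 : 1 - x ∈ Icc (0:ℝ) 1 := by
        simp only [mem_Icc] at *; constructor <;> linarith [hx.1, hx.2, hy.1]
      exact max_le_max (ih y hy) (by linarith [ih (1-x) hx1])
    linarith

end VAux

namespace VAux

/-- increment function -/
noncomputable def dd (k : ℕ) (y : ℝ) : ℝ := v (k+1) y - v k y

lemma vIntComp (j : ℕ) {a b : ℝ} (ha : a ∈ J) (hb : b ∈ J) :
    IntervalIntegrable (fun x => v j (1 - x)) volume a b := by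
  apply ContinuousOn.intervalIntegrable
  exact ContinuousOn.comp (vCont j) (continuousOn_const.sub continuousOn_id)
    (fun x hx => J_symm (uIcc_subset_J ha hb hx))

lemma mem_Icc01_J {y : ℝ} (h0 : 0 ≤ y) (h1 : y ≤ 1) : y ∈ J :=
  Icc01_subset_J ⟨h0, h1⟩

/-- Branch identity near 1: for `z ∈ [1/2,1]`,
`v (j+1) z = z * v j z + ((1-z) + ∫_0^{1-z} v j)`. -/
lemma idA (j : ℕ) {z : ℝ} (hz1 : 1/2 ≤ z) (hz2 : z ≤ 1) :
    v (j+1) z = z * v j z + ((1 - z) + ∫ u in (0:ℝ)..(1-z), v j u) := by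
  have hzI : z ∈ Icc (0:ℝ) 1 := ⟨by linarith, hz2⟩
  have hzJ := Icc01_subset_J hzI
  show z * v j z + _ = _
  congr 1
  have e : ∀ x ∈ Set.uIcc z 1, max (v j z) (1 + v j (1 - x)) = 1 + v j (1 - x) := by
    intro x hx
    rw [Set.uIcc_of_le hz2, mem_Icc] at hx
    have h1x : (1 - x) ∈ Icc (0:ℝ) 1 := ⟨by linarith [hx.2], by linarith [hx.1]⟩
    have : v j z ≤ v j (1 - x) := v_anti j (1-x) h1x z hzI (by linarith [hx.1])
    rw [max_eq_right (by linarith)]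
  rw [intervalIntegral.integral_congr e]
  have e2 : (∫ x in z..(1:ℝ), (1 + v j (1 - x)))
      = (∫ _ in z..(1:ℝ), (1:ℝ)) + ∫ x in z..(1:ℝ), v j (1 - x) :=
    intervalIntegral.integral_add intervalIntegrable_const (vIntComp j hzJ one_mem_J)
  rw [e2, intervalIntegral.integral_const, intervalIntegral.integral_comp_sub_left (v j) 1]
  norm_num

/-- Branch identity splitting at `1-y`: for `y ∈ [0,1/2]`. -/
lemma idB (j : ℕ) {y : ℝ} (hy1 : 0 ≤ y) (hy2 : y ≤ 1/2) :
    v (j+1) y = y * v j y + (∫ x in y..(1-y), max (v j y) (1 + v j (1 - x)))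
      + (y + ∫ u in (0:ℝ)..y, v j u) := by
  have hyI : y ∈ Icc (0:ℝ) 1 := ⟨hy1, by linarith⟩
  have hyJ := Icc01_subset_J hyI
  have hy'J : (1-y) ∈ J := J_symm hyJ
  show y * v j y + _ = _
  rw [add_assoc]
  congr 1
  have e1 : (∫ x in y..(1:ℝ), max (v j y) (1 + v j (1 - x)))
      = (∫ x in y..(1-y), max (v j y) (1 + v j (1 - x)))
        + ∫ x in (1-y)..(1:ℝ), max (v j y) (1 + v j (1 - x)) :=
    (intervalIntegral.integral_add_adjacent_intervals (vInt j _ hyJ hy'J)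
      (vInt j _ hy'J one_mem_J)).symm
  rw [e1]
  congr 1
  have e : ∀ x ∈ Set.uIcc (1-y) 1, max (v j y) (1 + v j (1 - x)) = 1 + v j (1 - x) := by
    intro x hx
    rw [Set.uIcc_of_le (by linarith), mem_Icc] at hx
    have h1x : (1 - x) ∈ Icc (0:ℝ) 1 := ⟨by linarith [hx.2], by linarith [hx.1]⟩
    have : v j y ≤ v j (1 - x) := v_anti j (1-x) h1x y hyI (by linarith [hx.1])
    rw [max_eq_right (by linarith)]
  rw [intervalIntegral.integral_congr e]
  have e2 : (∫ x in (1-y)..(1:ℝ), (1 + v j (1 - x)))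
      = (∫ _ in (1-y)..(1:ℝ), (1:ℝ)) + ∫ x in (1-y)..(1:ℝ), v j (1 - x) :=
    intervalIntegral.integral_add intervalIntegrable_const (vIntComp j hy'J one_mem_J)
  rw [e2, intervalIntegral.integral_const, intervalIntegral.integral_comp_sub_left (v j) 1]
  norm_num

lemma max_add_min_le {a b p q : ℝ} : max a b + min p q ≤ max (a + p) (b + q) := by
  rcases le_total a b with h | h <;> rcases le_total p q with h' | h' <;>
    simp [max_def, min_def] <;> split_ifs <;> linarith

lemma dd_nonneg (k : ℕ) {y : ℝ} (hy : y ∈ Icc (0:ℝ) 1) : 0 ≤ dd k y := by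
  have := v_mono_k k y hy
  simp only [dd]; linarith

/-- identity for `dd (k+1)` near 1. -/
lemma ddA (k : ℕ) {z : ℝ} (hz1 : 1/2 ≤ z) (hz2 : z ≤ 1) :
    dd (k+1) z = z * dd k z + ∫ u in (0:ℝ)..(1-z), dd k u := by
  have h0J : (0:ℝ) ∈ J := mem_Icc01_J le_rfl zero_le_one
  have hz'J : (1-z) ∈ J := J_symm (mem_Icc01_J (by linarith) hz2)
  simp only [dd]
  rw [idA (k+1) hz1 hz2, idA k hz1 hz2,
    intervalIntegral.integral_sub (vIntPlain (k+1) h0J hz'J) (vIntPlain k h0J hz'J)]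
  ring

/-- The two structural monotonicity invariants, by induction. -/
lemma MRD : ∀ k : ℕ, 1 ≤ k →
    (∀ y : ℝ, 0 ≤ y → y ≤ 1/2 → dd k (1-y) ≤ dd k y) ∧
    (∀ z₁ z₂ : ℝ, 1/2 ≤ z₁ → z₁ ≤ z₂ → z₂ ≤ 1 → dd k z₂ ≤ dd k z₁) := by
  intro k
  induction k with
  | zero => omega
  | succ k ih =>
    intro _
    rcases Nat.eq_zero_or_pos k with hk0 | hk1
    · -- base case k+1 = 1
      subst hk0
      have dd1 : ∀ y : ℝ, 0 ≤ y → y ≤ 1 → dd 1 y = 1/2 + y - (3/2)*y^2 := by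
        intro y h0 h1
        simp only [dd]
        rw [v_two ⟨h0, h1⟩, v_one]; ring
      constructor
      · intro y h0 h2
        rw [dd1 y h0 (by linarith), dd1 (1-y) (by linarith) (by linarith)]
        nlinarith
      · intro z₁ z₂ h1 h2 h3
        rw [dd1 z₁ (by linarith) (by linarith), dd1 z₂ (by linarith) h3]
        nlinarith
    · obtain ⟨hM, hRD⟩ := ih hk1
      -- mirror-dominance helper
      have mirror : ∀ u y : ℝ, 0 ≤ y → y ≤ 1/2 → y ≤ u → u ≤ 1 - y →
          dd k (1-y) ≤ dd k u := by
        intro u y h0 h2 hyu hu1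
        rcases le_total u (1/2) with hu | hu
        · calc dd k (1-y) ≤ dd k (1-u) := hRD (1-u) (1-y) (by linarith) (by linarith) (by linarith)
            _ ≤ dd k u := hM u (by linarith) hu
        · exact hRD u (1-y) hu hu1 (by linarith)
      constructor
      · -- M at k+1
        intro y h0 h2
        have hyI : y ∈ Icc (0:ℝ) 1 := ⟨h0, by linarith⟩
        have hyJ := Icc01_subset_J hyI
        have hy'J : (1-y) ∈ J := J_symm hyJ
        -- dd (k+1) (1-y)
        have eA : dd (k+1) (1-y) = (1-y) * dd k (1-y) + ∫ u in (0:ℝ)..y, dd k u := by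
          have := ddA k (z := 1-y) (by linarith) (by linarith)
          simpa using this
        -- dd (k+1) y
        have eB : dd (k+1) y = y * dd k y
            + (∫ x in y..(1-y), (max (v (k+1) y) (1 + v (k+1) (1 - x))
                - max (v k y) (1 + v k (1 - x))))
            + ∫ u in (0:ℝ)..y, dd k u := by
          simp only [dd]
          rw [idB (k+1) h0 h2, idB k h0 h2,
            intervalIntegral.integral_sub (vInt (k+1) _ hyJ hy'J) (vInt k _ hyJ hy'J)]
          have h0J : (0:ℝ) ∈ J := mem_Icc01_J le_rfl zero_le_one
          rw [intervalIntegral.integral_sub (vIntPlain (k+1) h0J hyJ) (vIntPlain k h0J hyJ)]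
          ring
        have hstep : (1 - 2*y) * dd k (1-y)
            ≤ ∫ x in y..(1-y), (max (v (k+1) y) (1 + v (k+1) (1 - x))
                - max (v k y) (1 + v k (1 - x))) := by
          have e0 : (1 - 2*y) * dd k (1-y) = ∫ _ in y..(1-y), dd k (1-y) := by
            rw [intervalIntegral.integral_const, smul_eq_mul]; ring
          rw [e0]
          apply intervalIntegral.integral_mono_on (by linarith) intervalIntegrable_const
            ((vInt (k+1) _ hyJ hy'J).sub (vInt k _ hyJ hy'J))
          intro x hx
          rw [mem_Icc] at hx
          have h1x0 : 0 ≤ 1 - x := by linarith [hx.2]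
          have h1x1 : 1 - x ≤ 1 := by linarith [hx.1, h0]
          -- max (a + p) (b + q) - max a b ≥ min p q where p = dd k y, q = dd k (1-x)
          have emax : max (v k y) (1 + v k (1-x)) + min (dd k y) (dd k (1-x))
              ≤ max (v (k+1) y) (1 + v (k+1) (1 - x)) := by
            have e1 : v (k+1) y = v k y + dd k y := by simp [dd]
            have e2 : (1:ℝ) + v (k+1) (1-x) = (1 + v k (1-x)) + dd k (1-x) := by
              simp only [dd]; ring
            rw [e1, e2]
            exact max_add_min_le
          have hmin : dd k (1-y) ≤ min (dd k y) (dd k (1-x)) := by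
            apply le_min (hM y h0 h2)
            exact mirror (1-x) y h0 h2 (by linarith [hx.2]) (by linarith [hx.1])
          linarith
        have hMy := hM y h0 h2
        rw [eA, eB]
        nlinarith [hstep, hMy]
      · -- RD at k+1
        intro z₁ z₂ h1 h2 h3
        have e1 := ddA k (z := z₁) h1 (by linarith)
        have e2 := ddA k (z := z₂) (by linarith) h3
        have h0J : (0:ℝ) ∈ J := mem_Icc01_J le_rfl zero_le_one
        have hz1'J : (1-z₁) ∈ J := J_symm (mem_Icc01_J (by linarith) (by linarith))
        have hz2'J : (1-z₂) ∈ J := J_symm (mem_Icc01_J (by linarith) h3)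
        have ddInt : ∀ {a b : ℝ}, a ∈ J → b ∈ J →
            IntervalIntegrable (dd k) volume a b := by
          intro a b ha hb
          exact (vIntPlain (k+1) ha hb).sub (vIntPlain k ha hb)
        have esplit : (∫ u in (0:ℝ)..(1-z₁), dd k u)
            = (∫ u in (0:ℝ)..(1-z₂), dd k u) + ∫ u in (1-z₂)..(1-z₁), dd k u :=
          (intervalIntegral.integral_add_adjacent_intervals (ddInt h0J hz2'J)
            (ddInt hz2'J hz1'J)).symm
        have hmid : (z₂ - z₁) * dd k z₂ ≤ ∫ u in (1-z₂)..(1-z₁), dd k u := by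
          have e0 : (z₂ - z₁) * dd k z₂ = ∫ _ in (1-z₂)..(1-z₁), dd k z₂ := by
            rw [intervalIntegral.integral_const, smul_eq_mul]; ring
          rw [e0]
          apply intervalIntegral.integral_mono_on (by linarith) intervalIntegrable_const
            (ddInt hz2'J hz1'J)
          intro u hu
          rw [mem_Icc] at hu
          calc dd k z₂ ≤ dd k (1-u) :=
                hRD (1-u) z₂ (by linarith [hu.2]) (by linarith [hu.1]) (by linarith)
            _ ≤ dd k u := hM u (by linarith [hu.1]) (by linarith [hu.2])
        have hz1dd := hRD z₁ z₂ h1 h2 h3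
        rw [e1, e2, esplit]
        nlinarith [hmid, hz1dd]

/-- Monotonicity of `h` in `k`: the central consequence. -/
lemma h_mono (k : ℕ) (hk : 1 ≤ k) {y : ℝ} (h0 : 0 ≤ y) (h2 : y ≤ 1/2) :
    1 + v (k+1) (1-y) - v (k+1) y ≤ 1 + v k (1-y) - v k y := by
  have := (MRD k hk).1 y h0 h2
  simp only [dd] at this
  linarith

end VAux

namespace VAux

/-- sublevel sets of the integrand -/
def Sset (k : ℕ) (b₀ c : ℝ) : Set ℝ := Icc 0 b₀ ∩ {u | 1 + v k u ≤ c}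

lemma Sset_closed (k : ℕ) {b₀ : ℝ} (hb : b₀ ∈ Icc (0:ℝ) 1) (c : ℝ) :
    IsClosed (Sset k b₀ c) := by
  have hcont : ContinuousOn (fun u => 1 + v k u) (Icc 0 b₀) :=
    continuousOn_const.add ((vCont k).mono
      (fun u hu => Icc01_subset_J ⟨hu.1, le_trans hu.2 hb.2⟩))
  exact ContinuousOn.preimage_isClosed_of_isClosed hcont isClosed_Icc isClosed_Iic

lemma Sset_meas (k : ℕ) {b₀ : ℝ} (hb : b₀ ∈ Icc (0:ℝ) 1) (c : ℝ) :
    MeasurableSet (Sset k b₀ c) := (Sset_closed k hb c).measurableSet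

lemma Sset_fin (k : ℕ) (b₀ c : ℝ) : volume (Sset k b₀ c) ≠ ⊤ := by
  apply ne_top_of_le_ne_top _ (measure_mono (Set.inter_subset_left))
  rw [Real.volume_Icc]
  exact ENNReal.ofReal_ne_top

lemma Sset_anti (k : ℕ) (b₀ : ℝ) {c c' : ℝ} (h : c ≤ c') :
    Sset k b₀ c ⊆ Sset k b₀ c' :=
  Set.inter_subset_inter_right _ (fun u hu => le_trans hu h)

lemma Sset_vol_Ioc (k : ℕ) {b₀ : ℝ} (hb : b₀ ∈ Icc (0:ℝ) 1) (c : ℝ) :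
    volume (Sset k b₀ c ∩ Ioc 0 b₀) = volume (Sset k b₀ c) := by
  apply le_antisymm (measure_mono Set.inter_subset_left)
  have hsub : Sset k b₀ c ⊆ (Sset k b₀ c ∩ Ioc 0 b₀) ∪ {0} := by
    intro u hu
    rcases eq_or_lt_of_le hu.1.1 with h | h
    · exact Or.inr (by simp [← h])
    · exact Or.inl ⟨hu, h, hu.1.2⟩
  calc volume (Sset k b₀ c) ≤ volume ((Sset k b₀ c ∩ Ioc 0 b₀) ∪ {0}) := measure_mono hsub
    _ ≤ volume (Sset k b₀ c ∩ Ioc 0 b₀) + volume ({0} : Set ℝ) := measure_union_le _ _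
    _ = volume (Sset k b₀ c ∩ Ioc 0 b₀) := by rw [Real.volume_singleton, add_zero]

lemma indicator_interval_integral (k : ℕ) {b₀ : ℝ} (hb : b₀ ∈ Icc (0:ℝ) 1) (c K : ℝ) :
    (∫ u in (0:ℝ)..b₀, (Sset k b₀ c).indicator (fun _ => K) u)
      = K * (volume (Sset k b₀ c)).toReal := by
  rw [intervalIntegral.integral_of_le hb.1,
    setIntegral_indicator (Sset_meas k hb c), setIntegral_const, smul_eq_mul,
    Set.inter_comm, measureReal_def, Sset_vol_Ioc k hb c, mul_comm]

lemma indicator_intervalIntegrable (k : ℕ) {b₀ : ℝ} (hb : b₀ ∈ Icc (0:ℝ) 1) (c K : ℝ) :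
    IntervalIntegrable ((Sset k b₀ c).indicator (fun _ => K)) volume 0 b₀ := by
  rw [intervalIntegrable_iff_integrableOn_Ioc_of_le hb.1]
  have h1 : IntegrableOn (fun _ : ℝ => K) (Ioc 0 b₀) volume := by
    apply (integrableOn_const_iff (C := K)).mpr
    right
    rw [Real.volume_Ioc]
    exact ENNReal.ofReal_lt_top
  exact h1.indicator (Sset_meas k hb c)

lemma sandwich (k : ℕ) {b₀ : ℝ} (hb : b₀ ∈ Icc (0:ℝ) 1) {c c' : ℝ} (h : c ≤ c') :
    (c' - c) * (volume (Sset k b₀ c)).toReal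
        ≤ (∫ u in (0:ℝ)..b₀, max c' (1 + v k u)) - (∫ u in (0:ℝ)..b₀, max c (1 + v k u)) ∧
    (∫ u in (0:ℝ)..b₀, max c' (1 + v k u)) - (∫ u in (0:ℝ)..b₀, max c (1 + v k u))
        ≤ (c' - c) * (volume (Sset k b₀ c')).toReal := by
  have h0J : (0:ℝ) ∈ J := mem_Icc01_J le_rfl zero_le_one
  have hbJ : b₀ ∈ J := Icc01_subset_J hb
  have hint : ∀ c'' : ℝ, IntervalIntegrable (fun u => max c'' (1 + v k u)) volume 0 b₀ :=
    fun c'' => vInt' k c'' h0J hbJ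
  have e : (∫ u in (0:ℝ)..b₀, max c' (1 + v k u)) - (∫ u in (0:ℝ)..b₀, max c (1 + v k u))
      = ∫ u in (0:ℝ)..b₀, (max c' (1 + v k u) - max c (1 + v k u)) :=
    (intervalIntegral.integral_sub (hint c') (hint c)).symm
  rw [e]
  constructor
  · rw [← indicator_interval_integral k hb c (c' - c)]
    apply intervalIntegral.integral_mono_on hb.1
      (indicator_intervalIntegrable k hb c (c'-c)) ((hint c').sub (hint c))
    intro u hu
    by_cases hS : u ∈ Sset k b₀ c
    · rw [Set.indicator_of_mem hS]
      have hGu : 1 + v k u ≤ c := hS.2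
      rw [max_eq_left hGu, max_eq_left (le_trans hGu h)]
    · rw [Set.indicator_of_notMem hS]
      have := max_le_max h (le_refl (1 + v k u))
      linarith
  · rw [← indicator_interval_integral k hb c' (c' - c)]
    apply intervalIntegral.integral_mono_on hb.1
      ((hint c').sub (hint c)) (indicator_intervalIntegrable k hb c' (c'-c))
    intro u hu
    by_cases hS : u ∈ Sset k b₀ c'
    · rw [Set.indicator_of_mem hS]
      have hGu : 1 + v k u ≤ c' := hS.2
      rw [max_eq_left hGu]
      have := le_max_left c (1 + v k u)
      linarith
    · rw [Set.indicator_of_notMem hS]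
      have hGu : c' < 1 + v k u := by
        by_contra hcon
        push_neg at hcon
        exact hS ⟨hu, hcon⟩
      rw [max_eq_right (le_of_lt hGu), max_eq_right (by linarith)]
      simp

end VAux

namespace VAux

lemma mm_mono (k : ℕ) (b₀ : ℝ) {c c' : ℝ} (h : c ≤ c') :
    (volume (Sset k b₀ c)).toReal ≤ (volume (Sset k b₀ c')).toReal :=
  ENNReal.toReal_mono (Sset_fin k b₀ c') (measure_mono (Sset_anti k b₀ h))

lemma measure_approx (k : ℕ) (hk : 1 ≤ k) {b₀ : ℝ} (hb : b₀ ∈ Icc (0:ℝ) 1) (c₀ : ℝ)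
    {ε : ℝ} (hε : 0 < ε) : ∃ δ > 0,
    (volume (Sset k b₀ (c₀+δ))).toReal < (volume (Sset k b₀ c₀)).toReal + ε ∧
    (volume (Sset k b₀ c₀)).toReal - ε < (volume (Sset k b₀ (c₀-δ))).toReal := by
  set l := (volume (Sset k b₀ c₀)).toReal with hl
  -- right approximation
  have hright : ∃ n : ℕ, (volume (Sset k b₀ (c₀ + 1/(n+1)))).toReal < l + ε := by
    set A : ℕ → Set ℝ := fun n => Sset k b₀ (c₀ + 1/(n+1)) with hA
    have hanti : Antitone A := by
      intro n m hnm
      exact Sset_anti k b₀ (by linarith [Nat.one_div_le_one_div (α := ℝ) hnm])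
    have hint : ⋂ n, A n = Sset k b₀ c₀ := by
      ext u
      simp only [Set.mem_iInter]
      constructor
      · intro h
        refine ⟨(h 0).1, ?_⟩
        by_contra hlt
        simp only [Set.mem_setOf_eq, not_le] at hlt
        obtain ⟨n, hn⟩ := exists_nat_one_div_lt (by linarith : (0:ℝ) < 1 + v k u - c₀)
        have := (h n).2
        rw [Set.mem_setOf_eq] at this
        linarith
      · intro h n
        have hp : (0:ℝ) < 1/(n+1) := by positivity
        exact Sset_anti k b₀ (by linarith) h
    have h1 := tendsto_measure_iInter_atTop (μ := volume) (s := A)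
      (fun n => (Sset_meas k hb _).nullMeasurableSet) hanti ⟨0, Sset_fin k b₀ _⟩
    rw [hint] at h1
    have h2 : Tendsto (fun n => (volume (A n)).toReal) atTop (nhds l) :=
      (ENNReal.tendsto_toReal (Sset_fin k b₀ c₀)).comp h1
    exact (h2.eventually_lt_const (by linarith)).exists
  -- left approximation
  have hleft : ∃ n : ℕ, l - ε < (volume (Sset k b₀ (c₀ - 1/(n+1)))).toReal := by
    set B : ℕ → Set ℝ := fun n => Sset k b₀ (c₀ - 1/(n+1)) with hB
    have hmono : Monotone B := by
      intro n m hnm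
      exact Sset_anti k b₀ (by linarith [Nat.one_div_le_one_div (α := ℝ) hnm])
    have h1 := tendsto_measure_iUnion_atTop (μ := volume) (s := B) hmono
    have hUeq : volume (⋃ n, B n) = volume (Sset k b₀ c₀) := by
      apply le_antisymm
      · apply measure_mono
        refine Set.iUnion_subset (fun n => Sset_anti k b₀ ?_)
        have hp : (0:ℝ) < 1/(n+1) := by positivity
        linarith
      · set T : Set ℝ := Icc 0 b₀ ∩ {u | 1 + v k u = c₀} with hT
        have hsub : Sset k b₀ c₀ ⊆ (⋃ n, B n) ∪ T := by
          intro u hu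
          have hu2 : 1 + v k u ≤ c₀ := hu.2
          rcases lt_or_eq_of_le hu2 with h | h
          · left
            obtain ⟨n, hn⟩ := exists_nat_one_div_lt (by linarith : (0:ℝ) < c₀ - (1 + v k u))
            exact Set.mem_iUnion.mpr ⟨n, hu.1, by
              rw [Set.mem_setOf_eq]; linarith⟩
          · exact Or.inr ⟨hu.1, h⟩
        have hTnull : volume T = 0 := by
          apply Set.Subsingleton.measure_zero
          intro u₁ hu₁ u₂ hu₂
          by_contra hne
          rcases lt_or_gt_of_ne hne with hlt | hlt
          · have := v_strictAnti k hk u₁ ⟨hu₁.1.1, le_trans hu₁.1.2 hb.2⟩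
              u₂ ⟨hu₂.1.1, le_trans hu₂.1.2 hb.2⟩ hlt
            have e1 : 1 + v k u₁ = c₀ := hu₁.2
            have e2 : 1 + v k u₂ = c₀ := hu₂.2
            linarith
          · have := v_strictAnti k hk u₂ ⟨hu₂.1.1, le_trans hu₂.1.2 hb.2⟩
              u₁ ⟨hu₁.1.1, le_trans hu₁.1.2 hb.2⟩ hlt
            have e1 : 1 + v k u₁ = c₀ := hu₁.2
            have e2 : 1 + v k u₂ = c₀ := hu₂.2
            linarith
        calc volume (Sset k b₀ c₀) ≤ volume ((⋃ n, B n) ∪ T) := measure_mono hsub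
          _ ≤ volume (⋃ n, B n) + volume T := measure_union_le _ _
          _ = volume (⋃ n, B n) := by rw [hTnull, add_zero]
    rw [hUeq] at h1
    have h2 : Tendsto (fun n => (volume (B n)).toReal) atTop (nhds l) :=
      (ENNReal.tendsto_toReal (Sset_fin k b₀ c₀)).comp h1
    exact (h2.eventually_const_lt (by linarith)).exists
  obtain ⟨n₁, hn₁⟩ := hright
  obtain ⟨n₂, hn₂⟩ := hleft
  refine ⟨min (1/((n₁:ℝ)+1)) (1/((n₂:ℝ)+1)), by positivity, ?_, ?_⟩
  · calc (volume (Sset k b₀ (c₀ + min (1/((n₁:ℝ)+1)) (1/((n₂:ℝ)+1))))).toReal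
        ≤ (volume (Sset k b₀ (c₀ + 1/(n₁+1)))).toReal :=
          mm_mono k b₀ (by linarith [min_le_left ((1:ℝ)/((n₁:ℝ)+1)) (1/((n₂:ℝ)+1))])
      _ < l + ε := hn₁
  · calc l - ε < (volume (Sset k b₀ (c₀ - 1/(n₂+1)))).toReal := hn₂
      _ ≤ (volume (Sset k b₀ (c₀ - min (1/((n₁:ℝ)+1)) (1/((n₂:ℝ)+1))))).toReal :=
          mm_mono k b₀ (by linarith [min_le_right ((1:ℝ)/((n₁:ℝ)+1)) (1/((n₂:ℝ)+1))])

end VAux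

namespace VAux

lemma phi_hasDerivAt (k : ℕ) (hk : 1 ≤ k) {b₀ : ℝ} (hb : b₀ ∈ Icc (0:ℝ) 1) (c₀ : ℝ) :
    HasDerivAt (fun c => ∫ u in (0:ℝ)..b₀, max c (1 + v k u))
      ((volume (Sset k b₀ c₀)).toReal) c₀ := by
  set Φ : ℝ → ℝ := fun c => ∫ u in (0:ℝ)..b₀, max c (1 + v k u) with hΦ
  set l := (volume (Sset k b₀ c₀)).toReal with hldef
  rw [hasDerivAt_iff_tendsto_slope, Metric.tendsto_nhdsWithin_nhds]
  intro ε hε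
  obtain ⟨δ, hδ, hR, hL⟩ := measure_approx k hk hb c₀ hε
  refine ⟨δ, hδ, ?_⟩
  intro x hx hdist
  rw [Set.mem_compl_iff, Set.mem_singleton_iff] at hx
  rw [Real.dist_eq] at hdist ⊢
  rw [slope_def_field]
  rcases lt_or_gt_of_ne hx with hlt | hgt
  · -- x < c₀
    have h1 := sandwich k hb (le_of_lt hlt)
    have hpos : 0 < c₀ - x := by linarith
    have e : (Φ x - Φ c₀)/(x - c₀) = (Φ c₀ - Φ x)/(c₀ - x) := by
      rw [← neg_sub (Φ c₀) (Φ x), ← neg_sub c₀ x, neg_div_neg_eq]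
    rw [e]
    have hup : (Φ c₀ - Φ x)/(c₀ - x) ≤ l := by
      rw [div_le_iff₀ hpos]
      have := h1.2
      linarith [h1.2]
    have hlow : (volume (Sset k b₀ x)).toReal ≤ (Φ c₀ - Φ x)/(c₀ - x) := by
      rw [le_div_iff₀ hpos]
      linarith [h1.1]
    have hmlow : l - ε < (volume (Sset k b₀ x)).toReal := by
      calc l - ε < (volume (Sset k b₀ (c₀ - δ))).toReal := hL
        _ ≤ (volume (Sset k b₀ x)).toReal := by
            apply mm_mono
            rw [abs_lt] at hdist
            linarith [hdist.1]
    rw [abs_lt]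
    constructor <;> linarith
  · -- c₀ < x
    have h1 := sandwich k hb (le_of_lt hgt)
    have hpos : 0 < x - c₀ := by linarith
    have hup : (Φ x - Φ c₀)/(x - c₀) ≤ (volume (Sset k b₀ x)).toReal := by
      rw [div_le_iff₀ hpos]
      linarith [h1.2]
    have hlow : l ≤ (Φ x - Φ c₀)/(x - c₀) := by
      rw [le_div_iff₀ hpos]
      linarith [h1.1]
    have hmup : (volume (Sset k b₀ x)).toReal < l + ε := by
      calc (volume (Sset k b₀ x)).toReal ≤ (volume (Sset k b₀ (c₀ + δ))).toReal := by
            apply mm_mono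
            rw [abs_lt] at hdist
            linarith [hdist.2]
        _ < l + ε := hR
    rw [abs_lt]
    constructor <;> linarith

end VAux

namespace VAux

lemma abs_max_sub_max_le₂ {a b c d : ℝ} : |max a c - max b d| ≤ |a - b| + |c - d| := by
  calc |max a c - max b d| = |(max a c - max b c) + (max b c - max b d)| := by ring_nf
    _ ≤ |max a c - max b c| + |max b c - max b d| := abs_add_le _ _
    _ ≤ |a - b| + |c - d| := by
        refine add_le_add abs_max_sub_max_le ?_
        rw [max_comm b c, max_comm b d]
        exact abs_max_sub_max_le

lemma tail_hasDerivAt (k : ℕ) {y₀ : ℝ} (hy : y₀ ∈ Icc (0:ℝ) 1)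
    (hcy : ContinuousAt (v k) y₀) :
    HasDerivAt (fun y => ∫ u in (1-y₀)..(1-y), max (v k y) (1 + v k u))
      (-(max (v k y₀) (1 + v k (1-y₀)))) y₀ := by
  have hb : (1-y₀) ∈ Icc (0:ℝ) 1 := ⟨by linarith [hy.2], by linarith [hy.1]⟩
  have hbJ : (1-y₀) ∈ J := Icc01_subset_J hb
  have hcb : ContinuousAt (v k) (1-y₀) := by
    apply (vCont k).continuousAt
    have : Ioo (-(1:ℝ)/2) (3/2) ∈ nhds (1-y₀) := by
      apply Ioo_mem_nhds <;> (simp only [mem_Icc] at hb; linarith [hb.1, hb.2])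
    exact Filter.mem_of_superset this Ioo_subset_Icc_self
  rw [hasDerivAt_iff_isLittleO, Asymptotics.isLittleO_iff]
  intro C hC
  rw [Metric.eventually_nhds_iff]
  have hC2 : 0 < C/2 := by linarith
  obtain ⟨δ₁, hδ₁, h₁⟩ := Metric.continuousAt_iff.mp hcy (C/2) hC2
  obtain ⟨δ₂, hδ₂, h₂⟩ := Metric.continuousAt_iff.mp hcb (C/2) hC2
  refine ⟨min δ₁ (min δ₂ (1/4)), by positivity, ?_⟩
  intro y hydist
  have hd1 : dist y y₀ < δ₁ := lt_of_lt_of_le hydist (min_le_left _ _)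
  have hd2 : dist y y₀ < δ₂ :=
    lt_of_lt_of_le hydist (le_trans (min_le_right _ _) (min_le_left _ _))
  have hd3 : dist y y₀ < 1/4 :=
    lt_of_lt_of_le hydist (le_trans (min_le_right _ _) (min_le_right _ _))
  rw [Real.dist_eq] at hd1 hd2 hd3
  have hyJ' : (1-y) ∈ J := by
    simp only [J, mem_Icc]
    rw [abs_lt] at hd3
    constructor <;> [linarith [hy.2, hd3.2]; linarith [hy.1, hd3.1]]
  set M₀ := max (v k y₀) (1 + v k (1-y₀)) with hM₀
  have hint1 : IntervalIntegrable (fun u => max (v k y) (1 + v k u)) volume (1-y₀) (1-y) :=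
    vInt' k _ hbJ hyJ'
  have econst : (y - y₀) • (-M₀) = ∫ _ in (1-y₀)..(1-y), M₀ := by
    rw [intervalIntegral.integral_const, smul_eq_mul, smul_eq_mul]
    ring
  have e1 : (∫ u in (1-y₀)..(1-y), max (v k y) (1 + v k u))
      - (∫ u in (1-y₀)..(1-y₀), max (v k y₀) (1 + v k u)) - (y - y₀) • (-M₀)
      = ∫ u in (1-y₀)..(1-y), (max (v k y) (1 + v k u) - M₀) := by
    rw [intervalIntegral.integral_same, econst,
      intervalIntegral.integral_sub hint1 intervalIntegrable_const]
    ring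
  rw [e1]
  have hbound : ∀ u ∈ Set.uIoc (1-y₀) (1-y), ‖max (v k y) (1 + v k u) - M₀‖ ≤ C := by
    intro u hu
    have huclose : |u - (1-y₀)| ≤ |y - y₀| := by
      rcases Set.mem_uIoc.mp hu with h | h
      · rw [abs_of_pos (by linarith [h.1] : (0:ℝ) < u - (1-y₀))]
        calc u - (1-y₀) ≤ (1-y) - (1-y₀) := by linarith [h.2]
          _ = y₀ - y := by ring
          _ ≤ |y₀ - y| := le_abs_self _
          _ = |y - y₀| := abs_sub_comm _ _
      · rw [abs_of_nonpos (by linarith [h.2] : u - (1-y₀) ≤ 0)]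
        calc -(u - (1-y₀)) = (1-y₀) - u := by ring
          _ ≤ y - y₀ := by linarith [h.1]
          _ ≤ |y - y₀| := le_abs_self _
    have hvy : |v k y - v k y₀| < C/2 := by
      have := h₁ (by rw [Real.dist_eq]; exact hd1)
      rwa [Real.dist_eq] at this
    have hvu : |v k u - v k (1-y₀)| < C/2 := by
      have := h₂ (x := u) (by rw [Real.dist_eq]; exact lt_of_le_of_lt huclose hd2)
      rwa [Real.dist_eq] at this
    calc ‖max (v k y) (1 + v k u) - M₀‖
        ≤ |v k y - v k y₀| + |(1 + v k u) - (1 + v k (1-y₀))| := abs_max_sub_max_le₂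
      _ ≤ |v k y - v k y₀| + |v k u - v k (1-y₀)| := by
          apply add_le_add (le_refl _)
          apply le_of_eq
          congr 1
          ring
      _ ≤ C := by linarith
  calc ‖∫ u in (1-y₀)..(1-y), (max (v k y) (1 + v k u) - M₀)‖
      ≤ C * |(1-y) - (1-y₀)| := intervalIntegral.norm_integral_le_of_norm_le_const hbound
    _ = C * ‖y - y₀‖ := by rw [Real.norm_eq_abs, show (1-y) - (1-y₀) = -(y - y₀) by ring, abs_neg]

end VAux

namespace VAux

lemma v_succ_eq (k : ℕ) (y : ℝ) :
    v (k+1) y = y * v k y + ∫ x in y..(1:ℝ), max (v k y) (1 + v k (1 - x)) := rfl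

lemma deriv_step (k : ℕ) (hk : 1 ≤ k) {y₀ : ℝ} (hy : y₀ ∈ Icc (0:ℝ) 1)
    (hdiff : DifferentiableAt ℝ (v k) y₀) :
    ∃ l : ℝ, 0 ≤ l ∧ l ≤ 1 - y₀ ∧
      HasDerivAt (v (k+1))
        (v k y₀ + (y₀ + l) * deriv (v k) y₀ - max (v k y₀) (1 + v k (1-y₀))) y₀ ∧
      (v k y₀ ≤ 1 + v k (1-y₀) → l = 0) := by
  have hb : (1-y₀) ∈ Icc (0:ℝ) 1 := ⟨by linarith [hy.2], by linarith [hy.1]⟩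
  have hbJ : (1-y₀) ∈ J := Icc01_subset_J hb
  have h0J : (0:ℝ) ∈ J := mem_Icc01_J le_rfl zero_le_one
  set l := (volume (Sset k (1-y₀) (v k y₀))).toReal with hldef
  have hl0 : 0 ≤ l := ENNReal.toReal_nonneg
  have hlb : l ≤ 1 - y₀ := by
    rw [hldef]
    calc (volume (Sset k (1-y₀) (v k y₀))).toReal
        ≤ (volume (Icc (0:ℝ) (1-y₀))).toReal :=
          ENNReal.toReal_mono (by rw [Real.volume_Icc]; exact ENNReal.ofReal_ne_top)
            (measure_mono Set.inter_subset_left)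
      _ = 1 - y₀ := by
          rw [Real.volume_Icc, ENNReal.toReal_ofReal (by linarith [hy.2] : (0:ℝ) ≤ 1 - y₀ - 0)]
          ring
  refine ⟨l, hl0, hlb, ?_, ?_⟩
  · -- HasDerivAt
    have hder := hdiff.hasDerivAt
    set d' := deriv (v k) y₀ with hd'
    have h1 : HasDerivAt (fun y => y * v k y) (1 * v k y₀ + y₀ * d') y₀ :=
      (hasDerivAt_id y₀).mul hder
    have hphi := phi_hasDerivAt k hk hb (v k y₀)
    have h2 : HasDerivAt (fun y => ∫ u in (0:ℝ)..(1-y₀), max (v k y) (1 + v k u))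
        (l * d') y₀ := by
      have := HasDerivAt.comp y₀ hphi hder
      exact this
    have h3 := tail_hasDerivAt k hy hder.continuousAt
    have hsum := (h1.add h2).add h3
    have heq : v (k+1) =ᶠ[nhds y₀]
        (fun y => (y * v k y + ∫ u in (0:ℝ)..(1-y₀), max (v k y) (1 + v k u))
          + ∫ u in (1-y₀)..(1-y), max (v k y) (1 + v k u)) := by
      rw [Filter.eventuallyEq_iff_exists_mem]
      refine ⟨{y | dist y y₀ < 1/4}, Metric.ball_mem_nhds y₀ (by norm_num), ?_⟩
      intro y hy'
      simp only [Set.mem_setOf_eq, Real.dist_eq] at hy'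
      have hyJ' : (1-y) ∈ J := by
        simp only [J, mem_Icc]
        rw [abs_lt] at hy'
        constructor <;> [linarith [hy.2, hy'.2]; linarith [hy.1, hy'.1]]
      have esub : (∫ x in y..(1:ℝ), max (v k y) (1 + v k (1 - x)))
          = ∫ u in (0:ℝ)..(1-y), max (v k y) (1 + v k u) := by
        have := intervalIntegral.integral_comp_sub_left
          (fun u => max (v k y) (1 + v k u)) 1 (a := y) (b := 1)
        rw [this]
        norm_num
      show v (k+1) y = (y * v k y + ∫ u in (0:ℝ)..(1-y₀), max (v k y) (1 + v k u))
          + ∫ u in (1-y₀)..(1-y), max (v k y) (1 + v k u)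
      rw [v_succ_eq k y, esub, ← intervalIntegral.integral_add_adjacent_intervals
        (vInt' k _ h0J hbJ) (vInt' k _ hbJ hyJ')]
      ring
    have := hsum.congr_of_eventuallyEq heq
    exact this.congr_deriv (by ring)
  · -- l = 0 when no split
    intro hle
    have hsub : Sset k (1-y₀) (v k y₀) ⊆ {1-y₀} := by
      intro u hu
      have hu1 : u ∈ Icc (0:ℝ) (1-y₀) := hu.1
      have hu2 : 1 + v k u ≤ v k y₀ := hu.2
      have hvu : v k u ≤ v k (1-y₀) := by linarith
      rcases lt_or_eq_of_le hu1.2 with h | h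
      · exfalso
        have := v_strictAnti k hk u ⟨hu1.1, by linarith [hu1.2, hy.1]⟩
          (1-y₀) hb h
        linarith
      · exact h
    rw [hldef]
    have : volume (Sset k (1-y₀) (v k y₀)) = 0 :=
      le_antisymm (le_trans (measure_mono hsub) (by rw [Real.volume_singleton]))
        (zero_le)
    rw [this]
    rfl

end VAux

namespace VAux

lemma v_one_hasDeriv (y : ℝ) : HasDerivAt (v 1) (-1) y := by
  have hv1 : v 1 = fun y : ℝ => 1 - y := funext v_one
  rw [hv1]
  exact ((hasDerivAt_const y (1:ℝ)).sub (hasDerivAt_id' y)).congr_deriv (by norm_num)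

lemma v_one_deriv (y : ℝ) : deriv (v 1) y = -1 := (v_one_hasDeriv y).deriv

/-- The full inductive package. -/
lemma main : ∀ k : ℕ, 1 ≤ k → ∀ y₀ ∈ Icc (0:ℝ) 1,
    DifferentiableAt ℝ (v k) y₀ ∧
    deriv (v k) y₀ ≤ 0 ∧
    (y₀ ≤ 1/3 → -1 ≤ deriv (v k) y₀ ∧
      1 + v k (1-y₀) - v k y₀ ≤ (1-y₀) * (-(deriv (v k) y₀))) := by
  intro k
  induction k with
  | zero => omega
  | succ k ih =>
    intro _ y₀ hy₀
    rcases Nat.eq_zero_or_pos k with hk0 | hk1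
    · subst hk0
      refine ⟨(v_one_hasDeriv y₀).differentiableAt, by rw [v_one_deriv]; norm_num, ?_⟩
      intro h13
      rw [v_one_deriv, v_one, v_one]
      constructor
      · norm_num
      · ring_nf
        nlinarith [hy₀.1]
    · -- inductive step, k ≥ 1
      obtain ⟨hP1, hP2, hP34⟩ := ih hk1 y₀ hy₀
      obtain ⟨l, hl0, hlb, hder, hl_eq⟩ := deriv_step k hk1 hy₀ hP1
      have hderiv_succ : deriv (v (k+1)) y₀
          = v k y₀ + (y₀ + l) * deriv (v k) y₀ - max (v k y₀) (1 + v k (1-y₀)) :=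
        hder.deriv
      refine ⟨hder.differentiableAt, ?_, ?_⟩
      · rw [hderiv_succ]
        have h1 : v k y₀ ≤ max (v k y₀) (1 + v k (1-y₀)) := le_max_left _ _
        have h2 : (y₀ + l) * deriv (v k) y₀ ≤ 0 :=
          mul_nonpos_of_nonneg_of_nonpos (by linarith [hy₀.1]) hP2
        linarith
      · intro h13
        obtain ⟨hP3, hP4⟩ := hP34 h13
        -- case analysis on the sign of h_k(y₀)
        rcases le_or_gt (v k y₀) (1 + v k (1-y₀)) with hsgn | hsgn
        · -- no-split case: l = 0
          have hl := hl_eq hsgn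
          subst hl
          rw [hderiv_succ, max_eq_right hsgn]
          constructor
          · -- -1 ≤ deriv v (k+1) y₀ via deriv v (k+1) ≥ deriv v k ≥ -1
            nlinarith [hP3, hP2, hy₀.1]
          · -- Q at k+1
            have hH : 1 + v (k+1) (1-y₀) - v (k+1) y₀ ≤ 1 + v k (1-y₀) - v k y₀ :=
              h_mono k hk1 hy₀.1 (by linarith)
            nlinarith [hP4, hy₀.1, hP2]
        · -- split case
          have hmax : max (v k y₀) (1 + v k (1-y₀)) = v k y₀ := max_eq_left (le_of_lt hsgn)
          rw [hderiv_succ, hmax]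
          have hcoef0 : 0 ≤ y₀ + l := by linarith [hy₀.1]
          have hcoef1 : y₀ + l ≤ 1 := by linarith
          constructor
          · -- -1 ≤ (y₀+l) * d'
            nlinarith [hP3, hP2]
          · -- Q at k+1 via h_{k+1} ≤ h_k < 0
            have hH : 1 + v (k+1) (1-y₀) - v (k+1) y₀ ≤ 1 + v k (1-y₀) - v k y₀ :=
              h_mono k hk1 hy₀.1 (by linarith)
            have hneg : 1 + v (k+1) (1-y₀) - v (k+1) y₀ < 0 := by linarith
            have hd2 : 0 ≤ (1-y₀) * (-(v k y₀ + (y₀ + l) * deriv (v k) y₀ - v k y₀)) := by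
              have : (0:ℝ) ≤ -((y₀ + l) * deriv (v k) y₀) := by nlinarith [hP2]
              nlinarith [hy₀.2]
            calc 1 + v (k+1) (1-y₀) - v (k+1) y₀ ≤ 0 := le_of_lt hneg
              _ ≤ _ := hd2

end VAux

/-- Each value function `v k` is differentiable on `[0,1]`, and for `k ≥ 1` and
`y ∈ [0, 1/3]` the derivatives satisfy `-1 ≤ (v k)' y ≤ (v (k+1))' y ≤ 0`. -/
theorem derivative_monotone_low :
    ∀ k : ℕ, 1 ≤ k →
      (∀ y : ℝ, y ∈ Set.Icc (0:ℝ) 1 → DifferentiableAt ℝ (v k) y) ∧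
      (∀ y : ℝ, y ∈ Set.Icc (0:ℝ) (1/3) →
        -1 ≤ deriv (v k) y ∧ deriv (v k) y ≤ deriv (v (k+1)) y ∧
          deriv (v (k+1)) y ≤ 0) := by
  intro k hk
  constructor
  · intro y hy
    exact (VAux.main k hk y hy).1
  · intro y hy
    have hy1 : y ∈ Set.Icc (0:ℝ) 1 := ⟨hy.1, by linarith [hy.2]⟩
    obtain ⟨hP1, hP2, hP34⟩ := VAux.main k hk y hy1
    obtain ⟨hP3, hP4⟩ := hP34 hy.2
    obtain ⟨_, hP2', _⟩ := VAux.main (k+1) (by omega) y hy1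
    refine ⟨hP3, ?_, hP2'⟩
    -- middle: deriv (v k) y ≤ deriv (v (k+1)) y
    obtain ⟨l, hl0, hlb, hder, hl_eq⟩ := VAux.deriv_step k hk hy1 hP1
    have hderiv_succ : deriv (v (k+1)) y
        = v k y + (y + l) * deriv (v k) y - max (v k y) (1 + v k (1-y)) := hder.deriv
    rcases le_or_gt (v k y) (1 + v k (1-y)) with hsgn | hsgn
    · have hl := hl_eq hsgn
      subst hl
      rw [hderiv_succ, max_eq_right hsgn]
      -- y d' - h ≥ d'  ⟺  (1-y)(-d') ≥ h
      nlinarith [hP4, hy.1]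
    · rw [hderiv_succ, max_eq_left (le_of_lt hsgn)]
      have hcoef1 : y + l ≤ 1 := by linarith
      nlinarith [hP2, hy.1]
end
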